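/- arXiv:1008.3677 — 6 statements merged into one kernel-verified Lean document; each statement's English description precedes it below -/
import Mathlib

section
/- Let S = {s_1 < s_2 < ... < s_n} be a set of n ≥ 1 integers with 0 ∉ S, and let f_0, f_1, ..., f_n be positive integers. Then the cardinality of MR_S(f_0, f_1, ..., f_n), the set of multi-noded rooted trees on S ∪ {0} of vertex data (f_0, f_1, ..., f_n), is (∑_{j=0}^{n} f_j)^{n−1} · f_0. -/
/-!
Orient each tree away from the root `r`: a multi-noded rooted tree is then the same as a parent
map `π` (sending every `v ≠ r` to its neighbour nearer to `r`) together with a label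
`β v ∈ [1, f (π v)]` for each `v ≠ r`. Hence the count is the weight `∑_π ∏_{v ≠ r} f (π v)`
of the rooted spanning trees. This weight makes sense for rooted forests on `W` with root set
`R` as well, and deleting a root `r` of such a forest turns its children `C` into roots:
`F(W, R) = ∑_{C ⊆ W \ R} f(r)^|C| F(W - r, R - r + C)`. A binomial identity then gives
`F(W, R) = (∑_R f) (∑_W f)^(|W \ R| - 1)` for `R ⊊ W` by induction on `W`.
-/

open SimpleGraph

-- The factor `x + y` spares the exponent `|M| - 1` of the closed form of the sum.
theorem add_mul_sum_powerset {α R : Type*} [CommSemiring R] [DecidableEq α]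
    (M : Finset α) (g : α → R) (x y t : R) :
    (x + y) * ∑ C ∈ M.powerset, x ^ C.card * (t + ∑ c ∈ C, g c) * y ^ (M \ C).card =
      (x + y) ^ M.card * (t * (x + y) + x * ∑ c ∈ M, g c) := by
  induction M using Finset.induction_on generalizing t with
  | empty => simp [mul_comm]
  | insert a M ha ih =>
    have hout : ∀ C ∈ M.powerset,
        x ^ C.card * (t + ∑ c ∈ C, g c) * y ^ (insert a M \ C).card =
          y * (x ^ C.card * (t + ∑ c ∈ C, g c) * y ^ (M \ C).card) := by
      intro C hC
      have haC : a ∉ C := fun h => ha (Finset.mem_powerset.1 hC h)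
      rw [Finset.insert_sdiff_of_notMem _ haC,
        Finset.card_insert_of_notMem fun h => ha (Finset.mem_sdiff.1 h).1]
      ring
    have hin : ∀ C ∈ M.powerset,
        x ^ (insert a C).card * (t + ∑ c ∈ insert a C, g c) * y ^ (insert a M \ insert a C).card =
          x * (x ^ C.card * (t + g a + ∑ c ∈ C, g c) * y ^ (M \ C).card) := by
      intro C hC
      have haC : a ∉ C := fun h => ha (Finset.mem_powerset.1 hC h)
      rw [Finset.card_insert_of_notMem haC, Finset.sum_insert haC, Finset.insert_sdiff_insert,
        Finset.sdiff_insert_of_notMem ha]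
      ring
    rw [Finset.sum_powerset_insert ha, Finset.sum_congr rfl hout, Finset.sum_congr rfl hin,
      ← Finset.mul_sum, ← Finset.mul_sum, mul_add, mul_left_comm, ih, mul_left_comm (x + y) x, ih,
      Finset.card_insert_of_notMem ha, Finset.sum_insert ha]
    ring

theorem exists_iterate_mem_of_forall_notMem {V : Type*} {π σ : V → V} {T : Set V}
    (h : ∀ v ∉ T, σ v = π v ∨ σ v ∈ T) {v : V} {k : ℕ} (hk : π^[k] v ∈ T) :
    ∃ j, σ^[j] v ∈ T := by
  induction k generalizing v with
  | zero => exact ⟨0, hk⟩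
  | succ k ih =>
    by_cases hv : v ∈ T
    · exact ⟨0, hv⟩
    rcases h v hv with hσ | hσ
    · obtain ⟨j, hj⟩ := ih (v := π v) hk
      exact ⟨j + 1, by rwa [Function.iterate_succ_apply, hσ]⟩
    · exact ⟨1, hσ⟩

section RootedForest

variable {V : Type*} [DecidableEq V] {W R C : Finset V} {π : V → V} {r : V}

-- Parent maps of forests on `W` with root set `R`; roots and vertices outside `W` are fixed.
structure IsRootedForest (W R : Finset V) (π : V → V) : Prop where
  apply_eq_of_notMem : ∀ v ∉ W \ R, π v = v
  apply_mem : ∀ v ∈ W \ R, π v ∈ W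
  exists_iterate_mem : ∀ v ∈ W, ∃ k, π^[k] v ∈ R

theorem mapsTo_of_forall_notMem_of_forall_mem {M : Finset V} (h₁ : ∀ v ∉ M, π v = v)
    (h₂ : ∀ v ∈ M, π v ∈ W) : Set.MapsTo π W W := fun v hv => by
  by_cases hvM : v ∈ M
  · exact h₂ v hvM
  · rwa [Finset.mem_coe, h₁ v hvM]

theorem erase_sdiff_erase_union (hr : r ∈ R) : W.erase r \ (R.erase r ∪ C) = (W \ R) \ C := by
  ext v
  by_cases hv : v = r <;> simp_all [and_assoc]

theorem erase_eq_erase_union_sdiff (hr : r ∈ R) (hRW : R ⊆ W) :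
    W.erase r = R.erase r ∪ (W \ R) := by
  ext v
  by_cases hv : v = r <;> by_cases hvR : v ∈ R <;> simp_all [fun h => hRW h]

theorem IsRootedForest.erase_root (h : IsRootedForest W R π) (hr : r ∈ R) :
    IsRootedForest (W.erase r) (R.erase r ∪ {v ∈ W \ R | π v = r})
      ({v ∈ W \ R | π v = r}.piecewise id π) := by
  set C := {v ∈ W \ R | π v = r}
  have h₁ : ∀ v ∉ W.erase r \ (R.erase r ∪ C), C.piecewise id π v = v := by
    rw [erase_sdiff_erase_union hr]
    intro v hv
    by_cases hvC : v ∈ C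
    · simp [hvC]
    · rw [Finset.piecewise_eq_of_notMem _ _ _ hvC]
      exact h.apply_eq_of_notMem v fun hvM => hv (Finset.mem_sdiff.2 ⟨hvM, hvC⟩)
  have h₂ : ∀ v ∈ W.erase r \ (R.erase r ∪ C), C.piecewise id π v ∈ W.erase r := by
    rw [erase_sdiff_erase_union hr]
    intro v hv
    obtain ⟨hvM, hvC⟩ := Finset.mem_sdiff.1 hv
    rw [Finset.piecewise_eq_of_notMem _ _ _ hvC]
    exact Finset.mem_erase.2 ⟨fun hπ => hvC (Finset.mem_filter.2 ⟨hvM, hπ⟩), h.apply_mem v hvM⟩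
  refine ⟨h₁, h₂, fun v hv => ?_⟩
  obtain ⟨k, hk⟩ := h.exists_iterate_mem v (Finset.mem_of_mem_erase hv)
  obtain ⟨j, hj⟩ := exists_iterate_mem_of_forall_notMem (σ := C.piecewise id π)
    (T := ↑(R ∪ C)) (fun u hu => Or.inl (Finset.piecewise_eq_of_notMem _ _ _ fun huC =>
      hu (Finset.mem_union_right _ huC))) (Finset.mem_union_left C hk)
  have hjW := (mapsTo_of_forall_notMem_of_forall_mem h₁ h₂).iterate j hv
  refine ⟨j, ?_⟩
  simp only [Finset.coe_union, Set.mem_union, Finset.mem_coe] at hj hjW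
  rw [Finset.mem_union, Finset.mem_erase]
  exact hj.imp_left fun hR => ⟨(Finset.mem_erase.1 hjW).1, hR⟩

theorem IsRootedForest.graft (h : IsRootedForest (W.erase r) (R.erase r ∪ C) π) (hr : r ∈ R)
    (hrW : r ∈ W) (hC : C ⊆ W \ R) : IsRootedForest W R (C.piecewise (fun _ => r) π) := by
  have h₁ := h.apply_eq_of_notMem
  have h₂ := h.apply_mem
  rw [erase_sdiff_erase_union hr] at h₁ h₂
  refine ⟨fun v hv => ?_, fun v hv => ?_, fun v hv => ?_⟩
  · have hvC : v ∉ C := fun hvC => hv (hC hvC)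
    rw [Finset.piecewise_eq_of_notMem _ _ _ hvC]
    exact h₁ v fun hv' => hv (Finset.mem_sdiff.1 hv').1
  · by_cases hvC : v ∈ C
    · rwa [Finset.piecewise_eq_of_mem _ _ _ hvC]
    · rw [Finset.piecewise_eq_of_notMem _ _ _ hvC]
      exact Finset.mem_of_mem_erase (h₂ v (Finset.mem_sdiff.2 ⟨hv, hvC⟩))
  · by_cases hvr : v = r
    · exact ⟨0, hvr ▸ hr⟩
    obtain ⟨k, hk⟩ := h.exists_iterate_mem v (Finset.mem_erase.2 ⟨hvr, hv⟩)
    obtain ⟨j, hj⟩ := exists_iterate_mem_of_forall_notMem (σ := C.piecewise (fun _ => r) π)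
      (T := ↑(R ∪ C)) (fun u hu => Or.inl (Finset.piecewise_eq_of_notMem _ _ _ fun huC =>
        hu (Finset.mem_union_right _ huC)))
      (Finset.union_subset_union (Finset.erase_subset r R) subset_rfl hk)
    rcases Finset.mem_union.1 hj with hjR | hjC
    · exact ⟨j, hjR⟩
    · refine ⟨j + 1, ?_⟩
      rwa [Function.iterate_succ_apply', Finset.piecewise_eq_of_mem _ _ _ hjC]

theorem IsRootedForest.filter_piecewise_eq (h : IsRootedForest (W.erase r) (R.erase r ∪ C) π)
    (hr : r ∈ R) (hC : C ⊆ W \ R) : {v ∈ W \ R | C.piecewise (fun _ => r) π v = r} = C := by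
  have h₂ := h.apply_mem
  rw [erase_sdiff_erase_union hr] at h₂
  ext v
  rw [Finset.mem_filter]
  refine ⟨fun ⟨hvM, hvr⟩ => ?_, fun hvC => ⟨hC hvC, Finset.piecewise_eq_of_mem _ _ _ hvC⟩⟩
  by_contra hvC
  rw [Finset.piecewise_eq_of_notMem _ _ _ hvC] at hvr
  exact (Finset.mem_erase.1 (h₂ v (Finset.mem_sdiff.2 ⟨hvM, hvC⟩))).1 hvr

end RootedForest

section ForestWeight

variable {V : Type*} [Fintype V] [DecidableEq V] {W R C : Finset V} {r : V}

open Classical in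
noncomputable def forestWeight (f : V → ℕ) (W R : Finset V) : ℕ :=
  ∑ π : V → V with IsRootedForest W R π, ∏ v ∈ W \ R, f (π v)

theorem forestWeight_self (f : V → ℕ) (W : Finset V) : forestWeight f W W = 1 := by
  simp only [forestWeight, Finset.sdiff_self, Finset.prod_empty, Finset.sum_const, smul_eq_mul,
    mul_one]
  refine Finset.card_eq_one.2 ⟨id, Finset.ext fun π => ?_⟩
  simp only [Finset.mem_filter, Finset.mem_univ, true_and, Finset.mem_singleton]
  refine ⟨fun h => funext fun v => h.apply_eq_of_notMem v (by simp), ?_⟩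
  rintro rfl
  exact ⟨fun _ _ => rfl, by simp, fun v hv => ⟨0, hv⟩⟩

theorem forestWeight_empty_roots (f : V → ℕ) (hW : W.Nonempty) :
    forestWeight f W ∅ = 0 := by
  classical
  obtain ⟨v, hv⟩ := hW
  refine Finset.sum_eq_zero fun π hπ => ?_
  obtain ⟨k, hk⟩ := (Finset.mem_filter.1 hπ).2.exists_iterate_mem v hv
  simp at hk

open Classical in
theorem sum_children_eq_mul_forestWeight (f : V → ℕ) (hr : r ∈ R) (hrW : r ∈ W)
    (hC : C ⊆ W \ R) :
    ∑ π : V → V with IsRootedForest W R π ∧ {v ∈ W \ R | π v = r} = C, ∏ v ∈ W \ R, f (π v) =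
      f r ^ C.card * forestWeight f (W.erase r) (R.erase r ∪ C) := by
  have hchild : ∀ π : V → V, {v ∈ W \ R | π v = r} = C → ∀ v ∈ C, π v = r :=
    fun π hπ v hv => by
      rw [← hπ, Finset.mem_filter] at hv
      exact hv.2
  rw [forestWeight, Finset.mul_sum]
  refine Finset.sum_nbij' (C.piecewise id ·) (C.piecewise (fun _ => r) ·) ?_ ?_ ?_ ?_ ?_
  · intro π hπ
    simp only [Finset.mem_filter, Finset.mem_univ, true_and] at hπ ⊢
    rw [← hπ.2]
    exact hπ.1.erase_root hr
  · intro π hπ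
    simp only [Finset.mem_filter, Finset.mem_univ, true_and] at hπ ⊢
    exact ⟨hπ.graft hr hrW hC, hπ.filter_piecewise_eq hr hC⟩
  · intro π hπ
    funext v
    by_cases hvC : v ∈ C
    · simp [hvC, hchild π (Finset.mem_filter.1 hπ).2.2 v hvC]
    · simp [hvC]
  · intro π hπ
    funext v
    by_cases hvC : v ∈ C
    · rw [Finset.piecewise_eq_of_mem _ _ _ hvC]
      refine ((Finset.mem_filter.1 hπ).2.apply_eq_of_notMem v ?_).symm
      rw [erase_sdiff_erase_union hr]
      exact fun hv => (Finset.mem_sdiff.1 hv).2 hvC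
    · simp [hvC]
  · intro π hπ
    rw [erase_sdiff_erase_union hr, ← Finset.prod_sdiff hC, mul_comm, ← Finset.prod_const,
      Finset.prod_congr rfl fun v hv => by rw [hchild π (Finset.mem_filter.1 hπ).2.2 v hv]]
    congr 1
    refine Finset.prod_congr rfl fun v hv => ?_
    rw [Finset.piecewise_eq_of_notMem _ _ _ (Finset.mem_sdiff.1 hv).2]

theorem forestWeight_eq_sum_powerset (f : V → ℕ) (hr : r ∈ R) (hrW : r ∈ W) :
    forestWeight f W R =
      ∑ C ∈ (W \ R).powerset, f r ^ C.card * forestWeight f (W.erase r) (R.erase r ∪ C) := by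
  classical
  rw [forestWeight, ← Finset.sum_fiberwise_of_maps_to (t := (W \ R).powerset)
    (g := fun π => {v ∈ W \ R | π v = r})
    fun π _ => Finset.mem_powerset.2 (Finset.filter_subset _ _)]
  refine Finset.sum_congr rfl fun C hC => ?_
  rw [← sum_children_eq_mul_forestWeight f hr hrW (Finset.mem_powerset.1 hC), Finset.filter_filter]

-- The closed form multiplied by `∑ v ∈ W, f v`, which avoids an exponent `|W \ R| - 1`.
theorem forestWeight_mul_sum (f : V → ℕ) (hf : ∀ v, 0 < f v) (hRW : R ⊆ W) :
    forestWeight f W R * ∑ v ∈ W, f v = (∑ v ∈ R, f v) * (∑ v ∈ W, f v) ^ (W \ R).card := by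
  induction W using Finset.strongInduction generalizing R with
  | H W ih =>
  by_cases hM : W \ R = ∅
  · obtain rfl : R = W := hRW.antisymm (Finset.sdiff_eq_empty_iff_subset.1 hM)
    simp [forestWeight_self]
  have hMne := Finset.nonempty_iff_ne_empty.2 hM
  obtain rfl | ⟨r, hr⟩ := R.eq_empty_or_nonempty
  · simp [forestWeight_empty_roots f (hMne.mono Finset.sdiff_subset)]
  have hrW := hRW hr
  have hWr := erase_eq_erase_union_sdiff hr hRW
  have hdisj : ∀ C ⊆ W \ R, Disjoint (R.erase r) C := fun C hC =>
    Finset.disjoint_of_subset_right hC (Finset.disjoint_sdiff.mono_left (Finset.erase_subset r R))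
  set s' := ∑ v ∈ W.erase r, f v
  have hs' : 0 < s' :=
    Finset.sum_pos (fun v _ => hf v) (hMne.mono (hWr ▸ Finset.subset_union_right))
  have hstep : forestWeight f W R * s' = ∑ C ∈ (W \ R).powerset,
      f r ^ C.card * ((∑ v ∈ R.erase r, f v) + ∑ v ∈ C, f v) * s' ^ ((W \ R) \ C).card := by
    rw [forestWeight_eq_sum_powerset f hr hrW, Finset.sum_mul]
    refine Finset.sum_congr rfl fun C hC => ?_
    have hC := Finset.mem_powerset.1 hC
    have hsub : R.erase r ∪ C ⊆ W.erase r := hWr ▸ Finset.union_subset_union subset_rfl hC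
    rw [mul_assoc, ih _ (Finset.erase_ssubset hrW) hsub, Finset.sum_union (hdisj C hC),
      erase_sdiff_erase_union hr, mul_assoc]
  have hsW : ∑ v ∈ W, f v = f r + s' := (Finset.add_sum_erase W f hrW).symm
  have hsR : ∑ v ∈ R, f v = f r + ∑ v ∈ R.erase r, f v := (Finset.add_sum_erase R f hr).symm
  have hs'R : s' = ∑ v ∈ R.erase r, f v + ∑ v ∈ W \ R, f v := by
    rw [← Finset.sum_union (hdisj _ subset_rfl), ← hWr]
  apply Nat.eq_of_mul_eq_mul_right hs'
  calc (forestWeight f W R * ∑ v ∈ W, f v) * s'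
      = (f r + s') * (forestWeight f W R * s') := by rw [hsW]; ring
    _ = (f r + s') ^ (W \ R).card *
          ((∑ v ∈ R.erase r, f v) * (f r + s') + f r * ∑ v ∈ W \ R, f v) := by
      rw [hstep, add_mul_sum_powerset]
    _ = (∑ v ∈ R, f v) * (∑ v ∈ W, f v) ^ (W \ R).card * s' := by
      rw [hsR, hsW]
      generalize (f r + s') ^ (W \ R).card = P
      rw [hs'R]
      ring

end ForestWeight

theorem SimpleGraph.Walk.le_add_length_of_forall_adj {V : Type*} {G : SimpleGraph V} {g : V → ℕ}
    (hg : ∀ a b, G.Adj a b → g b ≤ g a + 1) {u v : V} (p : G.Walk u v) :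
    g v ≤ g u + p.length := by
  induction p with
  | nil => simp
  | cons h p ih =>
    have := hg _ _ h
    rw [Walk.length_cons]
    omega

section TreeParent

variable {V : Type*} {G : SimpleGraph V} {r v w : V}

open Classical in
noncomputable def treeParent (G : SimpleGraph V) (r v : V) : V :=
  if h : ∃ w, G.Adj v w ∧ G.dist r w < G.dist r v then h.choose else v

theorem treeParent_self : treeParent G r r = r := by
  simp [treeParent]

theorem SimpleGraph.Reachable.exists_adj_dist_lt (h : G.Reachable r v) (hv : v ≠ r) :
    ∃ w, G.Adj v w ∧ G.dist r w < G.dist r v := by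
  obtain ⟨p, hp⟩ := h.symm.exists_walk_length_eq_dist
  have hnil := Walk.not_nil_of_ne (p := p) hv
  refine ⟨p.snd, Walk.adj_snd hnil, ?_⟩
  have := G.dist_le p.tail
  have := Walk.length_tail_add_one hnil
  rw [G.dist_comm, G.dist_comm (u := r)]
  omega

theorem SimpleGraph.Connected.treeParent_spec (hG : G.Connected) (hv : v ≠ r) :
    G.Adj v (treeParent G r v) ∧ G.dist r (treeParent G r v) < G.dist r v := by
  have h := (hG r v).exists_adj_dist_lt hv
  rw [treeParent, dif_pos h]
  exact h.choose_spec

theorem SimpleGraph.Connected.exists_iterate_treeParent_eq (hG : G.Connected) (r v : V) :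
    ∃ k, (treeParent G r)^[k] v = r := by
  induction h : G.dist r v using Nat.strong_induction_on generalizing v with
  | _ n ih =>
  by_cases hv : v = r
  · exact ⟨0, hv⟩
  obtain ⟨k, hk⟩ := ih _ (h ▸ (hG.treeParent_spec hv).2) (treeParent G r v) rfl
  exact ⟨k + 1, hk⟩

theorem SimpleGraph.IsTree.eq_treeParent (hG : G.IsTree) (hadj : G.Adj v w)
    (hlt : G.dist r w < G.dist r v) : w = treeParent G r v := by
  classical
  obtain ⟨p, hp, -⟩ := hG.connected.exists_path_of_dist r v
  have hpen : ∀ u, G.Adj v u → G.dist r u < G.dist r v → u = p.penultimate := by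
    intro u hu hlt
    obtain ⟨q, hq, hql⟩ := hG.connected.exists_path_of_dist r u
    have hvq : v ∉ q.support := fun hv => by
      have := G.dist_le (q.takeUntil v hv)
      have := q.length_takeUntil_le_length hv
      omega
    exact hG.isAcyclic.eq_penultimate_of_adj_end hp hu
      (hG.isAcyclic.mem_support_of_ne_mem_support_of_adj_of_isPath hp hq hu hvq)
  have hvr : v ≠ r := by
    rintro rfl
    simp at hlt
  obtain ⟨hadj', hlt'⟩ := hG.connected.treeParent_spec hvr
  rw [hpen w hadj hlt, hpen _ hadj' hlt']

def parentGraph (π : V → V) : SimpleGraph V :=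
  SimpleGraph.fromRel fun v w => π v = w

theorem parentGraph_adj {π : V → V} : (parentGraph π).Adj v w ↔ v ≠ w ∧ (π v = w ∨ π w = v) :=
  fromRel_adj _ _ _

theorem SimpleGraph.IsTree.parentGraph_treeParent (hG : G.IsTree) (r : V) :
    parentGraph (treeParent G r) = G := by
  ext a b
  rw [parentGraph_adj]
  refine ⟨fun ⟨hab, h⟩ => ?_, fun hadj => ⟨hadj.ne, ?_⟩⟩
  · rcases h with h | h
    · have ha : a ≠ r := by
        rintro rfl
        exact hab (treeParent_self.symm.trans h)
      exact h ▸ (hG.connected.treeParent_spec ha).1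
    · have hb : b ≠ r := by
        rintro rfl
        exact hab (h.symm.trans treeParent_self)
      exact h ▸ (hG.connected.treeParent_spec hb).1.symm
  · rcases (hG.dist_ne_of_adj r hadj).lt_or_gt with h | h
    · exact Or.inr (hG.eq_treeParent hadj.symm h).symm
    · exact Or.inl (hG.eq_treeParent hadj h).symm

end TreeParent

section Depth

variable {V : Type*} {π : V → V} {r v : V}

noncomputable def depth (π : V → V) (r v : V) : ℕ :=
  sInf {k | π^[k] v = r}

theorem iterate_depth (h : ∃ k, π^[k] v = r) : π^[depth π r v] v = r :=
  Nat.sInf_mem h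

theorem depth_self : depth π r r = 0 :=
  Nat.sInf_eq_zero.2 (Or.inl rfl)

theorem depth_apply_add_one (hπ : ∀ v, ∃ k, π^[k] v = r) (hv : v ≠ r) :
    depth π r (π v) + 1 = depth π r v := by
  obtain ⟨d, hd⟩ := Nat.exists_eq_succ_of_ne_zero fun (h : depth π r v = 0) => hv <| by
    have := iterate_depth (hπ v)
    rwa [h] at this
  have h₁ : depth π r (π v) ≤ d := Nat.sInf_le <| by
    change π^[d] (π v) = r
    rw [← Function.iterate_succ_apply, ← hd]
    exact iterate_depth (hπ v)
  have h₂ : depth π r v ≤ depth π r (π v) + 1 := Nat.sInf_le (iterate_depth (hπ (π v)))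
  omega

theorem apply_apply_ne (hπ : ∀ v, ∃ k, π^[k] v = r) (hr : π r = r) (hv : v ≠ r) : π (π v) ≠ v := by
  intro h
  have hπv : π v ≠ r := fun h' => hv (by rw [← h, h', hr])
  have := depth_apply_add_one hπ hv
  have := depth_apply_add_one hπ hπv
  rw [h] at this
  omega

theorem parentGraph_adj_apply (hπ : ∀ v, ∃ k, π^[k] v = r) (hv : v ≠ r) :
    (parentGraph π).Adj v (π v) := by
  refine parentGraph_adj.2 ⟨fun h => ?_, Or.inl rfl⟩
  have := depth_apply_add_one hπ hv
  rw [← h] at this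
  omega

theorem exists_walk_length_eq_depth (hπ : ∀ v, ∃ k, π^[k] v = r) (v : V) :
    ∃ p : (parentGraph π).Walk v r, p.length = depth π r v := by
  induction h : depth π r v using Nat.strong_induction_on generalizing v with
  | _ n ih =>
  by_cases hv : v = r
  · subst hv
    exact ⟨.nil, by rw [← h, depth_self]; rfl⟩
  have hd := depth_apply_add_one hπ hv
  obtain ⟨p, hp⟩ := ih _ (by omega) (π v) rfl
  exact ⟨.cons (parentGraph_adj_apply hπ hv) p, by rw [Walk.length_cons, hp, ← h, hd]⟩

theorem parentGraph_connected (hπ : ∀ v, ∃ k, π^[k] v = r) : (parentGraph π).Connected := by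
  have : Nonempty V := ⟨r⟩
  refine Connected.mk fun u v => ?_
  obtain ⟨p, -⟩ := exists_walk_length_eq_depth hπ u
  obtain ⟨q, -⟩ := exists_walk_length_eq_depth hπ v
  exact p.reachable.trans q.reachable.symm

theorem depth_le_add_one_of_adj (hπ : ∀ v, ∃ k, π^[k] v = r) (hr : π r = r) {a b : V}
    (hab : (parentGraph π).Adj a b) : depth π r b ≤ depth π r a + 1 := by
  rcases parentGraph_adj.1 hab with ⟨hne, h | h⟩
  · have ha : a ≠ r := by
      rintro rfl
      exact hne (hr.symm.trans h)
    have := depth_apply_add_one hπ ha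
    rw [h] at this
    omega
  · have hb : b ≠ r := by
      rintro rfl
      exact hne (h.symm.trans hr)
    have := depth_apply_add_one hπ hb
    rw [h] at this
    omega

theorem dist_parentGraph (hπ : ∀ v, ∃ k, π^[k] v = r) (hr : π r = r) (v : V) :
    (parentGraph π).dist r v = depth π r v := by
  refine le_antisymm ?_ ?_
  · obtain ⟨p, hp⟩ := exists_walk_length_eq_depth hπ v
    exact hp ▸ (SimpleGraph.dist_comm).trans_le (dist_le p)
  · obtain ⟨p, hp⟩ := (parentGraph_connected hπ).exists_walk_length_eq_dist r v
    have := p.le_add_length_of_forall_adj fun a b => depth_le_add_one_of_adj hπ hr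
    rw [depth_self] at this
    omega

-- Its edges are the `s(v, π v)` with `v ≠ r`, so a connected graph with `|V| - 1` edges.
theorem isTree_parentGraph [Fintype V] (hπ : ∀ v, ∃ k, π^[k] v = r) (hr : π r = r) :
    (parentGraph π).IsTree := by
  rw [isTree_iff_connected_and_card]
  refine ⟨parentGraph_connected hπ, ?_⟩
  have hbij : Function.Bijective fun v : {v // v ≠ r} =>
      (⟨s(v.1, π v.1), parentGraph_adj_apply hπ v.2⟩ : (parentGraph π).edgeSet) := by
    refine ⟨fun v w hvw => ?_, fun ⟨e, he⟩ => ?_⟩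
    · rcases Sym2.eq_iff.1 (congrArg Subtype.val hvw) with h | ⟨h₁, h₂⟩
      · exact Subtype.ext h.1
      · exact absurd (h₁ ▸ h₂ ▸ rfl) (apply_apply_ne hπ hr w.2)
    · induction e using Sym2.ind with
      | _ a b =>
      rcases parentGraph_adj.1 he with ⟨hne, h | h⟩
      · refine ⟨⟨a, fun ha => hne (ha ▸ (hr.symm.trans (ha ▸ h)))⟩, ?_⟩
        simp [h]
      · refine ⟨⟨b, fun hb => hne (hb ▸ (h.symm.trans (hb ▸ hr)))⟩, ?_⟩
        simp [h, Sym2.eq_swap]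
  rw [← Nat.card_congr (Equiv.ofBijective _ hbij)]
  classical
  simp only [Nat.card_eq_fintype_card, Fintype.card_subtype_compl, Fintype.card_subtype_eq]
  have := Fintype.card_pos_iff.2 ⟨r⟩
  omega

theorem treeParent_parentGraph [Fintype V] (hπ : ∀ v, ∃ k, π^[k] v = r) (hr : π r = r) :
    treeParent (parentGraph π) r = π := by
  funext v
  by_cases hv : v = r
  · rw [hv, treeParent_self, hr]
  refine ((isTree_parentGraph hπ hr).eq_treeParent (parentGraph_adj_apply hπ hv) ?_).symm
  rw [dist_parentGraph hπ hr, dist_parentGraph hπ hr, ← depth_apply_add_one hπ hv]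
  omega

end Depth

section Labels

variable {V : Type*} [Fintype V] [DecidableEq V]

def labelBoxes (f : V → ℕ) (W R : Finset V) (π : V → V) (v : V) : Finset ℕ :=
  if v ∈ W \ R then Finset.Icc 1 (f (π v)) else {0}

def LabelledForest (f : V → ℕ) (W R : Finset V) : Type _ :=
  {p : (V → V) × (V → ℕ) //
    IsRootedForest W R p.1 ∧ p.2 ∈ Fintype.piFinset (labelBoxes f W R p.1)}

theorem card_labelledForest (f : V → ℕ) (W R : Finset V) :
    Nat.card (LabelledForest f W R) = forestWeight f W R := by
  classical
  have : ∀ π, Finite {β // IsRootedForest W R π ∧ β ∈ Fintype.piFinset (labelBoxes f W R π)} :=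
    fun π => Finite.of_injective (β := Fintype.piFinset (labelBoxes f W R π))
      (fun β => ⟨β.1, β.2.2⟩) fun _ _ h => Subtype.ext (by simpa using h)
  rw [LabelledForest, Nat.card_congr (Equiv.subtypeProdEquivSigmaSubtype fun π β =>
      IsRootedForest W R π ∧ β ∈ Fintype.piFinset (labelBoxes f W R π)), Nat.card_sigma,
    forestWeight, Finset.sum_filter]
  refine Finset.sum_congr rfl fun π _ => ?_
  split_ifs with h
  · simp only [h, true_and]
    rw [Nat.card_eq_finsetCard, Fintype.card_piFinset]
    simp only [labelBoxes, apply_ite Finset.card, Nat.card_Icc, add_tsub_cancel_right,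
      Finset.card_singleton, Finset.prod_ite_mem, Finset.univ_inter]
  · simp [h]

theorem isRootedForest_univ_singleton_iff {π : V → V} {r : V} :
    IsRootedForest Finset.univ {r} π ↔ π r = r ∧ ∀ v, ∃ k, π^[k] v = r := by
  refine ⟨fun h => ⟨h.apply_eq_of_notMem r (by simp), fun v => by
    simpa using h.exists_iterate_mem v (Finset.mem_univ v)⟩, fun ⟨hr, hπ⟩ => ⟨?_, ?_, ?_⟩⟩
  · intro v hv
    obtain rfl : v = r := by simpa using hv
    exact hr
  · simp
  · simpa using hπ

theorem mem_piFinset_labelBoxes_univ_singleton {f : V → ℕ} {π : V → V} {r : V} {β : V → ℕ} :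
    β ∈ Fintype.piFinset (labelBoxes f Finset.univ {r} π) ↔
      β r = 0 ∧ ∀ v, v ≠ r → β v ∈ Finset.Icc 1 (f (π v)) := by
  simp only [Fintype.mem_piFinset, labelBoxes, Finset.mem_sdiff, Finset.mem_univ,
    Finset.mem_singleton, true_and]
  refine ⟨fun h => ⟨by simpa using h r, fun v hv => by simpa [hv] using h v⟩, fun h v => ?_⟩
  by_cases hv : v = r
  · simp [hv, h.1]
  · simpa [hv] using h.2 v hv

end Labels

section EdgeLabel

variable {V : Type*} [DecidableEq V] {π : V → V} {β : V → ℕ} {r : V}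

-- Symmetrised to descend to `Sym2`; on an edge only one summand survives (`apply_apply_ne`).
def edgeLabel (π : V → V) (β : V → ℕ) : Sym2 V → ℕ :=
  Sym2.lift ⟨fun a b => (if π a = b then β a else 0) + (if π b = a then β b else 0),
    fun _ _ => add_comm _ _⟩

theorem edgeLabel_mk (a b : V) :
    edgeLabel π β s(a, b) = (if π a = b then β a else 0) + (if π b = a then β b else 0) :=
  Sym2.lift_mk _ _ _

theorem edgeLabel_apply (hπ : ∀ v, ∃ k, π^[k] v = r) (hr : π r = r) (hβ : β r = 0) (v : V) :
    edgeLabel π β s(v, π v) = β v := by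
  rw [edgeLabel_mk]
  by_cases hv : v = r
  · subst hv
    simp [hr, hβ]
  · simp [apply_apply_ne hπ hr hv]

theorem edgeLabel_of_notMem_edgeSet (hπ : ∀ v, ∃ k, π^[k] v = r) (hβ : β r = 0) {e : Sym2 V}
    (he : e ∉ (parentGraph π).edgeSet) : edgeLabel π β e = 0 := by
  induction e using Sym2.ind with
  | _ a b =>
  rw [mem_edgeSet, parentGraph_adj, not_and_or, not_not, not_or] at he
  rw [edgeLabel_mk]
  rcases he with rfl | ⟨h₁, h₂⟩
  · by_cases ha : a = r
    · simp [ha, hβ]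
    · simp [(parentGraph_adj_apply hπ ha).ne.symm]
  · simp [h₁, h₂]

theorem SimpleGraph.IsTree.edgeLabel_treeParent {G : SimpleGraph V} {βs : Sym2 V → ℕ}
    (hG : G.IsTree) (hzero : ∀ e, e ∉ G.edgeSet → βs e = 0) :
    edgeLabel (treeParent G r) (fun v => βs s(v, treeParent G r v)) = βs := by
  have hr : treeParent G r r = r := treeParent_self
  have hπ := hG.connected.exists_iterate_treeParent_eq r
  have hβr : βs s(r, treeParent G r r) = 0 := hzero _ (by simp [hr])
  funext e
  by_cases he : e ∈ G.edgeSet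
  · induction e using Sym2.ind with
    | _ a b =>
    rw [← hG.parentGraph_treeParent r, mem_edgeSet, parentGraph_adj] at he
    rcases he.2 with rfl | rfl
    · exact edgeLabel_apply hπ hr hβr a
    · rw [Sym2.eq_swap]
      exact edgeLabel_apply hπ hr hβr b
  · rw [hzero e he]
    refine edgeLabel_of_notMem_edgeSet hπ hβr ?_
    rwa [hG.parentGraph_treeParent r]

end EdgeLabel

section MultiNodedRootedTree

variable {V : Type*} [Fintype V] [DecidableEq V]

def MultiNodedRootedTree (f : V → ℕ) (r : V) : Type _ :=
  {p : SimpleGraph V × (Sym2 V → ℕ) //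
    p.1.IsTree ∧
    (∀ v w, p.1.Adj v w → p.1.dist r v < p.1.dist r w → p.2 s(v, w) ∈ Finset.Icc 1 (f v)) ∧
    (∀ e, e ∉ p.1.edgeSet → p.2 e = 0)}

variable {f : V → ℕ} {r : V}

theorem SimpleGraph.IsTree.mem_labelledForest {G : SimpleGraph V} {βs : Sym2 V → ℕ}
    (hG : G.IsTree)
    (hlabel : ∀ v w, G.Adj v w → G.dist r v < G.dist r w → βs s(v, w) ∈ Finset.Icc 1 (f v))
    (hzero : ∀ e, e ∉ G.edgeSet → βs e = 0) :
    IsRootedForest Finset.univ {r} (treeParent G r) ∧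
      (fun v => βs s(v, treeParent G r v)) ∈
        Fintype.piFinset (labelBoxes f Finset.univ {r} (treeParent G r)) := by
  refine ⟨isRootedForest_univ_singleton_iff.2
    ⟨treeParent_self, hG.connected.exists_iterate_treeParent_eq r⟩,
    mem_piFinset_labelBoxes_univ_singleton.2 ⟨hzero _ (by simp [treeParent_self]), fun v hv => ?_⟩⟩
  obtain ⟨hadj, hlt⟩ := hG.connected.treeParent_spec hv
  rw [Sym2.eq_swap]
  exact hlabel _ _ hadj.symm hlt

theorem IsRootedForest.mem_multiNodedRootedTree {π : V → V} {β : V → ℕ}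
    (hπ : IsRootedForest Finset.univ {r} π)
    (hβ : β ∈ Fintype.piFinset (labelBoxes f Finset.univ {r} π)) :
    (parentGraph π).IsTree ∧
      (∀ v w, (parentGraph π).Adj v w → (parentGraph π).dist r v < (parentGraph π).dist r w →
        edgeLabel π β s(v, w) ∈ Finset.Icc 1 (f v)) ∧
      (∀ e, e ∉ (parentGraph π).edgeSet → edgeLabel π β e = 0) := by
  obtain ⟨hr, hπ⟩ := isRootedForest_univ_singleton_iff.1 hπ
  obtain ⟨hβr, hβ⟩ := mem_piFinset_labelBoxes_univ_singleton.1 hβ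
  refine ⟨isTree_parentGraph hπ hr, fun v w hadj hlt => ?_,
    fun e he => edgeLabel_of_notMem_edgeSet hπ hβr he⟩
  have hw : w ≠ r := by
    rintro rfl
    simp at hlt
  have hvw : v = π w := by
    rw [(isTree_parentGraph hπ hr).eq_treeParent hadj.symm hlt, treeParent_parentGraph hπ hr]
  rw [hvw, Sym2.eq_swap, edgeLabel_apply hπ hr hβr]
  exact hβ w hw

theorem IsRootedForest.treeParent_parentGraph_edgeLabel {π : V → V} {β : V → ℕ}
    (hπ : IsRootedForest Finset.univ {r} π)
    (hβ : β ∈ Fintype.piFinset (labelBoxes f Finset.univ {r} π)) :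
    (treeParent (parentGraph π) r, fun v => edgeLabel π β s(v, treeParent (parentGraph π) r v)) =
      (π, β) := by
  obtain ⟨hr, hπ⟩ := isRootedForest_univ_singleton_iff.1 hπ
  obtain ⟨hβr, -⟩ := mem_piFinset_labelBoxes_univ_singleton.1 hβ
  rw [treeParent_parentGraph hπ hr]
  exact congrArg (Prod.mk π) (funext (edgeLabel_apply hπ hr hβr))

variable (f r) in
noncomputable def multiNodedRootedTreeEquiv :
    MultiNodedRootedTree f r ≃ LabelledForest f Finset.univ {r} where
  toFun p := ⟨(treeParent p.1.1 r, fun v => p.1.2 s(v, treeParent p.1.1 r v)),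
    p.2.1.mem_labelledForest p.2.2.1 p.2.2.2⟩
  invFun p := ⟨(parentGraph p.1.1, edgeLabel p.1.1 p.1.2), p.2.1.mem_multiNodedRootedTree p.2.2⟩
  left_inv p := Subtype.ext <| Prod.ext (p.2.1.parentGraph_treeParent r)
    (p.2.1.edgeLabel_treeParent p.2.2.2)
  right_inv p := Subtype.ext (p.2.1.treeParent_parentGraph_edgeLabel p.2.2)

theorem card_multiNodedRootedTree (f : V → ℕ) (r : V) :
    Nat.card (MultiNodedRootedTree f r) = forestWeight f Finset.univ {r} :=
  (Nat.card_congr (multiNodedRootedTreeEquiv f r)).trans (card_labelledForest f _ _)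

end MultiNodedRootedTree

/-- **Proposition 2.2.** Let `S` be a set of `n ≥ 1` integers with `0 ∉ S` and let
`f : S ∪ {0} → ℕ` assign a positive integer to each vertex (so `f₀ = f(0)` and `f_i = f(s_i)`).
A multi-noded rooted tree on `S ∪ {0}` of vertex data `f` is a pair `(T, β)` where `T` is a
tree on the vertex set `S ∪ {0}` (rooted at `0`) and `β` assigns to each edge `e` of `T`
a number in `{1, …, f v}`, where `v` is the parent end of `e` (the end closer to the
root `0`); here `β` is extended by `0` off the edges of `T`. The number of multi-noded
rooted trees is `(∑_{j} f_j)^(n-1) · f₀`. -/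
theorem multiNodedRootedTree_card (n : ℕ) (hn : 1 ≤ n)
    (S : Finset ℤ) (hS : (0 : ℤ) ∉ S) (hcard : S.card = n)
    (f : ↥(insert (0 : ℤ) S) → ℕ) (hf : ∀ v, 1 ≤ f v) :
    Nat.card {p : SimpleGraph ↥(insert (0 : ℤ) S) × (Sym2 ↥(insert (0 : ℤ) S) → ℕ) //
        p.1.IsTree ∧
        (∀ v w, p.1.Adj v w →
          p.1.dist ⟨0, Finset.mem_insert_self 0 S⟩ v <
            p.1.dist ⟨0, Finset.mem_insert_self 0 S⟩ w →
          p.2 s(v, w) ∈ Finset.Icc 1 (f v)) ∧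
        (∀ e, e ∉ p.1.edgeSet → p.2 e = 0)} =
      (∑ v, f v) ^ (n - 1) * f ⟨0, Finset.mem_insert_self 0 S⟩ := by
  set r : ↥(insert (0 : ℤ) S) := ⟨0, Finset.mem_insert_self 0 S⟩
  change Nat.card (MultiNodedRootedTree f r) = _
  have hV : Fintype.card ↥(insert (0 : ℤ) S) = n + 1 := by
    rw [Fintype.card_coe, Finset.card_insert_of_notMem hS, hcard]
  have hcount := forestWeight_mul_sum f hf (Finset.subset_univ {r})
  rw [Finset.sum_singleton, Finset.card_univ_sdiff, Finset.card_singleton, hV,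
    Nat.add_sub_cancel] at hcount
  obtain ⟨m, rfl⟩ : ∃ m, n = m + 1 := ⟨n - 1, by omega⟩
  rw [card_multiNodedRootedTree, Nat.add_sub_cancel]
  apply Nat.eq_of_mul_eq_mul_right (Finset.sum_pos (fun v _ => hf v) ⟨r, Finset.mem_univ r⟩)
  rw [hcount, pow_succ]
  ring
end

section
/- Let τ ∈ S_d be a d-cycle and let (σ_1, ..., σ_{r-1}) be a factorization of τ of type (e_1, ..., e_{r-1}). Then its factorization graph G is connected, and ∑_{j=1}^{r-1} (e_j − 1) = d − 1 if and only if G is a tree. -/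
open Equiv Equiv.Perm SimpleGraph

/-- Every edge of `G` joins an `S`-vertex (a `Sum.inl`) to a `[d]`-vertex (a `Sum.inr`). -/
def IsBipartiteSD {k d : ℕ} (G : SimpleGraph (Fin k ⊕ Fin d)) : Prop :=
  (∀ a b : Fin k, ¬ G.Adj (Sum.inl a) (Sum.inl b)) ∧
    ∀ x y : Fin d, ¬ G.Adj (Sum.inr x) (Sum.inr y)

/-- `G ∈ 𝒢_S(d, r; e₁, …, e_{r-1})`: an `S`-`[d]` bipartite graph in which the `S`-vertex
`s_j` has degree `e j`. -/
def MemGS {k d : ℕ} (G : SimpleGraph (Fin k ⊕ Fin d)) (e : Fin k → ℕ) : Prop :=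
  IsBipartiteSD G ∧ ∀ j : Fin k, (G.neighborSet (Sum.inl j)).ncard = e j

/-- `(σ₁, …, σ_{r-1})` is a factorization of `τ` of type `(e₁, …, e_{r-1})`:
each `σ j` is an `e j`-cycle and the ordered product is `τ`. -/
def IsFactorization {k d : ℕ} (τ : Perm (Fin d)) (e : Fin k → ℕ)
    (σ : Fin k → Perm (Fin d)) : Prop :=
  (∀ j, (σ j).IsCycle ∧ (σ j).support.card = e j) ∧ (List.ofFn σ).prod = τ

/-- The factorization graph of `σ`: the `S`-vertex `s_j` is joined to the points of the
support of `σ j`. -/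
def facGraph {k d : ℕ} (σ : Fin k → Perm (Fin d)) : SimpleGraph (Fin k ⊕ Fin d) :=
  SimpleGraph.fromRel (fun u v => ∃ (j : Fin k) (x : Fin d),
    u = Sum.inl j ∧ v = Sum.inr x ∧ x ∈ (σ j).support)

/-- Delete all edges incident to `v` (the components of the other vertices are then
exactly the components obtained by removing the vertex `v`). -/
def delV {W : Type*} (G : SimpleGraph W) (v : W) : SimpleGraph W :=
  G.deleteEdges {e : Sym2 W | v ∈ e}

/-- The `[d]`-vertex set of the connected component of `w` after removing the vertex `v`. -/
def compD {k d : ℕ} (G : SimpleGraph (Fin k ⊕ Fin d)) (v w : Fin k ⊕ Fin d) : Set (Fin d) :=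
  {y : Fin d | (delV G v).Reachable w (Sum.inr y)}

/-- `P` is a consecutive piece of the circle `C_γ`. -/
def IsConsecPiece {d : ℕ} (γ : Perm (Fin d)) (P : Set (Fin d)) : Prop :=
  ∃ x ∈ γ.support, ∃ m : ℕ, 1 ≤ m ∧ P = (fun i : ℕ => (γ ^ i) x) '' Set.Iio m

/-- The counterclockwise position of `y` on `C_γ`, starting from `ν`. -/
noncomputable def ccwPos {d : ℕ} (γ : Perm (Fin d)) (ν y : Fin d) : ℕ :=
  sInf {n : ℕ | 1 ≤ n ∧ (γ⁻¹ ^ n) ν = y}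

/-- The `S`-vertex `s` has the consecutive partition property (CPP) on `(G, γ)`: the
`[d]`-vertex sets of the components obtained by removing `s` partition `C_γ` into
consecutive pieces. -/
def HasCPP {k d : ℕ} (G : SimpleGraph (Fin k ⊕ Fin d)) (γ : Perm (Fin d)) (s : Fin k) : Prop :=
  ∀ x ∈ γ.support, IsConsecPiece γ (compD G (Sum.inl s) (Sum.inr x))

/-- The `[d]`-vertex `ν` has the counterclockwise increasing consecutive partition property
(CICPP) on `(G, γ)`: the `[d]`-vertex sets of the components obtained by removing `ν`
partition `C_γ ∖ {ν}` into consecutive pieces, and reading counterclockwise from `ν`, the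
pieces occur in the order of the increasing `S`-vertices incident to `ν`. -/
def HasCICPP {k d : ℕ} (G : SimpleGraph (Fin k ⊕ Fin d)) (γ : Perm (Fin d)) (ν : Fin d) :
    Prop :=
  (∀ j : Fin k, G.Adj (Sum.inr ν) (Sum.inl j) →
    IsConsecPiece γ (compD G (Sum.inr ν) (Sum.inl j))) ∧
  (∀ j j' : Fin k, G.Adj (Sum.inr ν) (Sum.inl j) → G.Adj (Sum.inr ν) (Sum.inl j') → j ≠ j' →
    Disjoint (compD G (Sum.inr ν) (Sum.inl j)) (compD G (Sum.inr ν) (Sum.inl j'))) ∧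
  (∀ y ∈ γ.support, y ≠ ν →
    ∃ j : Fin k, G.Adj (Sum.inr ν) (Sum.inl j) ∧ y ∈ compD G (Sum.inr ν) (Sum.inl j)) ∧
  (∀ j j' : Fin k, G.Adj (Sum.inr ν) (Sum.inl j) → G.Adj (Sum.inr ν) (Sum.inl j') → j < j' →
    ∀ y ∈ compD G (Sum.inr ν) (Sum.inl j), ∀ y' ∈ compD G (Sum.inr ν) (Sum.inl j'),
      ccwPos γ ν y < ccwPos γ ν y')

/-! Each factor `σ j` moves points of `[d]` only inside the neighbourhood of `s_j`, so every
element of the group generated by the factors, in particular every power of the `d`-cycle `τ`,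
moves points along paths of `G`; hence all of `[d]`, and with it all of `G`, is connected. Then
`G`, with `(r - 1) + d` vertices and `∑ e_j` edges, is a tree iff `∑ e_j = (r - 1) + d - 1`. -/

open Finset

section FactorizationGraph

variable {k d : ℕ} (σ : Fin k → Perm (Fin d))

@[simp]
lemma facGraph_adj_inl_inr {j : Fin k} {x : Fin d} :
    (facGraph σ).Adj (Sum.inl j) (Sum.inr x) ↔ x ∈ (σ j).support := by
  simp [facGraph]

lemma edgeSet_facGraph : (facGraph σ).edgeSet =
    (fun p : (_ : Fin k) × Fin d => s(Sum.inl p.1, Sum.inr p.2)) ''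
      ↑(univ.sigma fun j => (σ j).support) := by
  ext e
  induction e using Sym2.ind with
  | _ u v =>
  simp only [mem_edgeSet, facGraph, fromRel_adj, Set.mem_image, mem_coe, mem_sigma, mem_univ,
    Sigma.exists, Sym2.eq_iff]
  aesop

lemma card_edgeSet_facGraph : Nat.card (facGraph σ).edgeSet = ∑ j, #(σ j).support := by
  have hinj : Function.Injective
      (fun p : (_ : Fin k) × Fin d => s(Sum.inl p.1, Sum.inr p.2)) := by
    rintro ⟨j, x⟩ ⟨j', x'⟩ h
    simp only [Sym2.eq_iff, Sum.inl.injEq, Sum.inr.injEq, reduceCtorEq, and_false,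
      or_false] at h
    obtain ⟨rfl, rfl⟩ := h
    rfl
  rw [edgeSet_facGraph, Nat.card_coe_set_eq, Set.ncard_image_of_injective _ hinj,
    Set.ncard_coe_finset, card_sigma]

lemma facGraph_reachable_apply_of_mem_closure {g : Perm (Fin d)}
    (hg : g ∈ Subgroup.closure (Set.range σ)) (x : Fin d) :
    (facGraph σ).Reachable (Sum.inr x) (Sum.inr (g x)) := by
  induction hg using Subgroup.closure_induction generalizing x with
  | mem g hg =>
    obtain ⟨j, rfl⟩ := hg
    by_cases hx : x ∈ (σ j).support
    · have hσx : σ j x ∈ (σ j).support := Perm.apply_mem_support.mpr hx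
      exact ((facGraph_adj_inl_inr σ).mpr hx).symm.reachable.trans
        ((facGraph_adj_inl_inr σ).mpr hσx).reachable
    · rw [Perm.notMem_support.mp hx]
  | one => rfl
  | mul g h _ _ ihg ihh => exact (ihh x).trans (ihg (h x))
  | inv g _ ih => simpa using (ih (g⁻¹ x)).symm

lemma facGraph_connected_of_isCycle_mem_closure (hσ : ∀ j, σ j ≠ 1) {τ : Perm (Fin d)}
    (hτ : τ.IsCycle) (hτd : τ.support = univ) (hτσ : τ ∈ Subgroup.closure (Set.range σ)) :
    (facGraph σ).Connected := by
  have hmoved (x : Fin d) : τ x ≠ x := Perm.mem_support.mp (hτd ▸ mem_univ x)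
  have hreach_inr (x y : Fin d) : (facGraph σ).Reachable (Sum.inr x) (Sum.inr y) := by
    obtain ⟨n, rfl⟩ := hτ.exists_pow_eq (hmoved x) (hmoved y)
    exact facGraph_reachable_apply_of_mem_closure σ (pow_mem hτσ n) x
  obtain ⟨x₀, -⟩ := hτ
  have hreach (u : Fin k ⊕ Fin d) : (facGraph σ).Reachable u (Sum.inr x₀) := by
    rcases u with j | x
    · obtain ⟨x, hx⟩ := nonempty_iff_ne_empty.mpr (mt Perm.support_eq_empty_iff.mp (hσ j))
      exact ((facGraph_adj_inl_inr σ).mpr hx).reachable.trans (hreach_inr x x₀)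
    · exact hreach_inr x x₀
  have : Nonempty (Fin k ⊕ Fin d) := ⟨Sum.inr x₀⟩
  exact ⟨fun u v => (hreach u).trans (hreach v).symm⟩

end FactorizationGraph

lemma sum_sub_one_add_card {ι : Type*} (s : Finset ι) {f : ι → ℕ} (hf : ∀ i ∈ s, 1 ≤ f i) :
    ∑ i ∈ s, (f i - 1) + #s = ∑ i ∈ s, f i := by
  rw [card_eq_sum_ones, ← sum_add_distrib]
  exact sum_congr rfl fun i hi => Nat.sub_add_cancel (hf i hi)

theorem facGraph_connected_and_sum_iff_isTree_general (d r : ℕ)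
    (τ : Perm (Fin d)) (hτ : τ.IsCycle) (hτd : τ.support.card = d)
    (e : Fin (r - 1) → ℕ)
    (σ : Fin (r - 1) → Perm (Fin d)) (hσ : IsFactorization τ e σ) :
    (facGraph σ).Connected ∧
      ((∑ j, (e j - 1) = d - 1) ↔ (facGraph σ).IsTree) := by
  obtain ⟨hcyc, hprod⟩ := hσ
  have hτσ : τ ∈ Subgroup.closure (Set.range σ) :=
    hprod ▸ list_prod_mem fun g hg => Subgroup.subset_closure (List.mem_ofFn.mp hg)
  have hconn := facGraph_connected_of_isCycle_mem_closure σ (fun j => (hcyc j).1.ne_one) hτ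
    (eq_univ_of_card _ (by simpa using hτd)) hτσ
  have hd : 0 < d := hτd ▸ card_pos.mpr hτ.nonempty_support
  have hcard (j) : #(σ j).support = e j := (hcyc j).2
  have hsum : ∑ j, (e j - 1) + (r - 1) = ∑ j, e j := by
    have h := sum_sub_one_add_card univ fun j _ =>
      hcard j ▸ (hcyc j).1.two_le_card_support.trans' one_le_two
    rwa [card_univ, Fintype.card_fin] at h
  have hedges : Nat.card (facGraph σ).edgeSet = ∑ j, e j :=
    (card_edgeSet_facGraph σ).trans (sum_congr rfl fun j _ => hcard j)
  rw [isTree_iff_connected_and_card, hedges, Nat.card_sum, Nat.card_fin, Nat.card_fin]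
  exact ⟨hconn, fun h => ⟨hconn, by omega⟩, fun h => by omega⟩

/-- **Corollary 3.4.** The factorization graph `G` of a factorization `(σ₁, …, σ_{r-1})`
of a `d`-cycle `τ` of type `(e₁, …, e_{r-1})` is connected, and `∑ (e_j - 1) = d - 1`
if and only if `G` is a tree. -/
theorem facGraph_connected_and_sum_iff_isTree (d r : ℕ) (hd : 2 ≤ d) (hr : 2 ≤ r)
    (τ : Perm (Fin d)) (hτ : τ.IsCycle) (hτd : τ.support.card = d)
    (e : Fin (r - 1) → ℕ) (he : ∀ j, 2 ≤ e j)
    (σ : Fin (r - 1) → Perm (Fin d)) (hσ : IsFactorization τ e σ) :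
    (facGraph σ).Connected ∧
      ((∑ j, (e j - 1) = d - 1) ↔ (facGraph σ).IsTree) :=
  facGraph_connected_and_sum_iff_isTree_general d r τ hτ hτd e σ hσ
end

section
/- Let μ = (u_1 u_2 ⋯ u_q) be a q-cycle in S_d and let η be a permutation of S_d with supp(η) = {u_{j_1}, ..., u_{j_p}} ⊆ supp(μ), where q ≥ j_1 > j_2 > ... > j_p ≥ 1. Let s denote the number of disjoint cycles (counting fixed points of μη lying in supp(μ) as cycles of length 1) in the cycle decomposition of μη restricted to supp(μ); equivalently s = q − ι(μη), where ι denotes the index (sum of cycle lengths minus one over all cycles). Then s ≤ p, and the following are equivalent: (i) s = p; (ii) η is the p-cycle (u_{j_1} u_{j_2} ⋯ u_{j_p}); (iii) μη = (u_{j_1+1} u_{j_1+2} ⋯ u_q u_1 ⋯ u_{j_p}) (u_{j_p+1} u_{j_p+2} ⋯ u_{j_{p-1}}) ⋯ (u_{j_2+1} u_{j_2+2} ⋯ u_{j_1}). -/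
/-!
Write `π = μη` and call the points of `supp η` marked. Since `η` fixes the unmarked points, `π`
agrees with `μ` there, so walking along `π` from any point of `supp μ` follows `μ` until the next
marked point. Hence every cycle of `π` on `supp μ` passes through a marked point; as
`s = q - ι(π)` counts these cycles, `s ≤ p`, with equality iff the `p` marked points lie in
pairwise distinct cycles.

If `η` sends `u_{j_m}` to `u_{j_k}`, then `π` sends `u_{j_m}` to `u_{j_k + 1}` and walks from there
to the marked point following `u_{j_k}` on `μ`, which is `u_{j_{k-1}}`. So distinct cycles force
`k = m + 1` for every `m`, i.e. `η = (u_{j_1} ⋯ u_{j_p})`. For this `η`, `π` runs through each arc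
between consecutive marked points and returns, which gives the product formula (iii) and the `p`
distinct cycles; and (iii) determines `η` by cancelling `μ`.
-/

open Equiv Equiv.Perm Finset

namespace Equiv.Perm

variable {α : Type*}

theorem pow_apply_eq_of_apply_eq_succ (π : Perm α) (f : ℕ → α) (a : ℕ) {n : ℕ}
    (h : ∀ t, a ≤ t → t < a + n → π (f t) = f (t + 1)) : (π ^ n) (f a) = f (a + n) := by
  induction n with
  | zero => rfl
  | succ n ih =>
    rw [pow_succ', mul_apply, ih fun t ht ht' => h t ht (by omega), h _ (by omega) (by omega)]
    rfl

theorem SameCycle.exists_pow_lt_of_pow_apply_eq_self [Finite α] {π : Perm α} {x y : α} {L : ℕ}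
    (hL : 0 < L) (hx : (π ^ L) x = x) (h : SameCycle π x y) : ∃ n < L, (π ^ n) x = y := by
  obtain ⟨i, -, rfl⟩ := h.exists_pow_eq'
  refine ⟨i % L, Nat.mod_lt _ hL, ?_⟩
  have hper : Function.IsPeriodicPt π L x := by
    rwa [Function.IsPeriodicPt, Function.IsFixedPt, ← coe_pow]
  rw [coe_pow, coe_pow, hper.iterate_mod_apply]

theorem card_image_sameCycle_add_card_support [Fintype α] [DecidableEq α] (π : Perm α)
    [DecidableEq (Quotient (SameCycle.setoid π))] {M : Finset α} (hM : π.support ⊆ M) :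
    #(M.image (Quotient.mk (SameCycle.setoid π))) + #π.support =
      #M + Multiset.card π.cycleType := by
  set mk := Quotient.mk (SameCycle.setoid π)
  have hfix : #((M \ π.support).image mk) = #M - #π.support := by
    rw [card_image_of_injOn, card_sdiff_of_subset hM]
    intro x hx y _ hxy
    exact (Quotient.exact hxy : SameCycle π x y).eq_of_left
      (notMem_support.mp (mem_sdiff.mp hx).2)
  have hcyc : #(π.support.image mk) = #π.cycleFactorsFinset := by
    have hlift : (π.support.image mk).image
        (Quotient.lift π.cycleOf fun _ _ h => SameCycle.cycleOf_eq h) = π.cycleFactorsFinset := by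
      ext c
      simp only [image_image, mem_image]
      constructor
      · rintro ⟨x, hx, rfl⟩
        exact cycleOf_mem_cycleFactorsFinset_iff.mpr hx
      · intro hc
        obtain ⟨x, hx⟩ := (mem_cycleFactorsFinset_iff.mp hc).1.nonempty_support
        exact ⟨x, mem_cycleFactorsFinset_support_le hc hx, (cycle_is_cycleOf hx hc).symm⟩
    rw [← hlift]
    refine (card_image_of_injOn ?_).symm
    rintro _ hX _ hY hxy
    obtain ⟨x, hx, rfl⟩ := mem_image.mp hX
    obtain ⟨y, -, rfl⟩ := mem_image.mp hY
    have hxy : π.cycleOf x = π.cycleOf y := hxy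
    have hxy' : x ∈ (π.cycleOf y).support :=
      hxy ▸ mem_support_cycleOf_iff.mpr ⟨SameCycle.refl _ _, hx⟩
    exact Quotient.sound (mem_support_cycleOf_iff.mp hxy').1.symm
  have hdisj : _root_.Disjoint ((M \ π.support).image mk) (π.support.image mk) := by
    rw [disjoint_left]
    simp only [mem_image, mem_sdiff, not_exists, not_and]
    rintro _ ⟨x, ⟨-, hx⟩, rfl⟩ y hy hxy
    exact hx ((Quotient.exact hxy : SameCycle π y x).mem_support_iff.mp hy)
  have hct : Multiset.card π.cycleType = #π.cycleFactorsFinset := by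
    rw [cycleType_def, Multiset.card_map]
    rfl
  rw [← sdiff_union_of_subset hM, image_union, card_union_of_disjoint hdisj, hfix, hcyc, hct,
    sdiff_union_of_subset hM]
  have := card_le_card hM
  omega

end Equiv.Perm

namespace List

variable {α ι : Type*}

theorem formPerm_map_range'_apply [DecidableEq α] (v : ℕ → α) {a L t : ℕ}
    (hv : ((range' a L).map v).Nodup) (ht : a ≤ t) (ht' : t < a + L) :
    ((range' a L).map v).formPerm (v t) = v (if t + 1 = a + L then a else t + 1) := by
  have h := formPerm_apply_getElem _ hv (t - a) (by simp; omega)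
  simp only [getElem_map, getElem_range', length_map, length_range', Nat.one_mul,
    Nat.add_sub_cancel' ht] at h
  rw [h]
  congr 1
  split_ifs with hL
  · rw [show t - a + 1 = L by omega, Nat.mod_self, Nat.add_zero]
  · rw [Nat.mod_eq_of_lt (by omega)]
    omega

theorem prod_map_apply_eq_self (F : ι → Equiv.Perm α) {l : List ι} {x : α}
    (h : ∀ i ∈ l, F i x = x) : (l.map F).prod x = x := by
  induction l with
  | nil => rfl
  | cons i l ih =>
    rw [map_cons, prod_cons, mul_apply, ih fun i hi => h i (mem_cons_of_mem _ hi),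
      h i mem_cons_self]

theorem prod_map_apply_eq_of_forall_ne (F : ι → Equiv.Perm α) {l : List ι} (hl : l.Nodup)
    {k : ι} (hk : k ∈ l) {x : α} (h : ∀ i ∈ l, i ≠ k → F i x = x ∧ F i (F k x) = F k x) :
    (l.map F).prod x = F k x := by
  induction l with
  | nil => cases hk
  | cons i l ih =>
    rw [map_cons, prod_cons, mul_apply]
    obtain ⟨hil, hl⟩ := nodup_cons.mp hl
    by_cases hik : i = k
    · subst hik
      rw [prod_map_apply_eq_self F fun i' hi' => (h i' (mem_cons_of_mem _ hi')
        (ne_of_mem_of_not_mem hi' hil)).1]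
    · rw [ih hl ((mem_cons.mp hk).resolve_left (Ne.symm hik))
        fun i' hi' => h i' (mem_cons_of_mem _ hi'), (h i mem_cons_self hik).2]

end List

/-- The positions `j 0 > j 1 > ⋯ > j (p-1)` of the marked points `u (j i)` on the cycle
`u 0 ↦ u 1 ↦ ⋯ ↦ u (q-1) ↦ u 0`. -/
structure IsMarking (q p : ℕ) (j : ℕ → ℕ) : Prop where
  pos : 0 < p
  lt : ∀ i < p, j i < q
  strictAntiOn : StrictAntiOn j (Set.Iio p)

/-- The marked positions cut the cycle into the arcs `(j k, arcEnd k]`, read mod `q`;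
the arc `k = 0` is the one that wraps around through `q - 1` and `0`. -/
def arcEnd (q p : ℕ) (j : ℕ → ℕ) (k : ℕ) : ℕ := if k = 0 then j (p - 1) + q else j (k - 1)

namespace IsMarking

variable {q p : ℕ} {j : ℕ → ℕ} {k k' t t' : ℕ}

theorem q_pos (hj : IsMarking q p j) : 0 < q := (hj.lt 0 hj.pos).pos

theorem apply_le_of_le (hj : IsMarking q p j) (hkk' : k ≤ k') (hk' : k' < p) : j k' ≤ j k :=
  hj.strictAntiOn.antitoneOn (by simp only [Set.mem_Iio]; omega) hk' hkk'

theorem apply_lt_of_lt (hj : IsMarking q p j) (hkk' : k < k') (hk' : k' < p) : j k' < j k :=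
  hj.strictAntiOn (by simp only [Set.mem_Iio]; omega) hk' hkk'

theorem lt_arcEnd (hj : IsMarking q p j) (hk : k < p) : j k < arcEnd q p j k := by
  unfold arcEnd
  split_ifs
  · have := hj.lt k hk
    omega
  · exact hj.apply_lt_of_lt (by omega) hk

theorem arcEnd_mod (hj : IsMarking q p j) (hk : k < p) :
    arcEnd q p j k % q = j (if k = 0 then p - 1 else k - 1) := by
  unfold arcEnd
  split_ifs
  · rw [Nat.add_mod_right, Nat.mod_eq_of_lt (hj.lt _ (by omega))]
  · exact Nat.mod_eq_of_lt (hj.lt _ (by omega))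

theorem arcEnd_le (hj : IsMarking q p j) (hkk' : k < k') (hk' : k' < p) :
    arcEnd q p j k' ≤ j k := by
  unfold arcEnd
  rw [if_neg (by omega)]
  exact hj.apply_le_of_le (by omega) (by omega)

/-- The window `(j (p-1), j (p-1) + q]` meets each residue class mod `q` exactly once. -/
theorem mem_window (hj : IsMarking q p j) (hk : k < p) (ht : j k < t)
    (ht' : t ≤ arcEnd q p j k) : j (p - 1) < t ∧ t ≤ j (p - 1) + q := by
  have := hj.apply_le_of_le (show k ≤ p - 1 by omega) (by omega)
  unfold arcEnd at ht'
  split_ifs at ht'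
  · omega
  · have := hj.lt (k - 1) (by omega)
    omega

theorem eq_of_mod_eq (hj : IsMarking q p j) (hk : k < p) (ht : j k < t)
    (ht' : t ≤ arcEnd q p j k) (hk' : k' < p) (hs : j k' < t') (hs' : t' ≤ arcEnd q p j k')
    (h : t % q = t' % q) : k = k' ∧ t = t' := by
  have hw := hj.mem_window hk ht ht'
  have hw' := hj.mem_window hk' hs hs'
  have htt' : t = t' := Nat.ModEq.eq_of_abs_lt h (abs_sub_lt_iff.mpr ⟨by omega, by omega⟩)
  refine ⟨?_, htt'⟩
  rcases lt_trichotomy k k' with hlt | heq | hgt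
  · have := hj.arcEnd_le hlt hk'
    omega
  · exact heq
  · have := hj.arcEnd_le hgt hk
    omega

theorem exists_arcEnd_mod_eq (hj : IsMarking q p j) (hk : k < p) :
    ∃ k' < p, arcEnd q p j k' % q = j k := by
  by_cases hlast : k + 1 = p
  · exact ⟨0, hj.pos, by rw [hj.arcEnd_mod hj.pos, if_pos rfl, ← hlast, Nat.add_sub_cancel]⟩
  · exact ⟨k + 1, by omega, by
      rw [hj.arcEnd_mod (by omega), if_neg (by omega), Nat.add_sub_cancel]⟩

theorem mod_ne_of_lt_arcEnd (hj : IsMarking q p j) (hk : k < p) (ht : j k < t)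
    (ht' : t < arcEnd q p j k) (hk' : k' < p) : t % q ≠ j k' := by
  intro h
  obtain ⟨k'', hk'', hmod⟩ := hj.exists_arcEnd_mod_eq hk'
  obtain ⟨rfl, rfl⟩ :=
    hj.eq_of_mod_eq hk ht ht'.le hk'' (hj.lt_arcEnd hk'') le_rfl (by rw [h, hmod])
  exact lt_irrefl _ ht'

theorem exists_mem_arc (hj : IsMarking q p j) {n : ℕ} (hn : n < q) :
    ∃ k < p, ∃ t, j k < t ∧ t ≤ arcEnd q p j k ∧ t % q = n := by
  have hlast := hj.lt (p - 1) (by have := hj.pos; omega)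
  by_cases hlow : n ≤ j (p - 1)
  · refine ⟨0, hj.pos, n + q, ?_, ?_, by rw [Nat.add_mod_right, Nat.mod_eq_of_lt hn]⟩
    · have := hj.lt 0 hj.pos
      omega
    · unfold arcEnd
      rw [if_pos rfl]
      omega
  · have hex : ∃ k, j k < n := ⟨p - 1, by omega⟩
    refine ⟨Nat.find hex, ?_, n, Nat.find_spec hex, ?_, Nat.mod_eq_of_lt hn⟩
    · exact (Nat.find_min' hex (by omega : j (p - 1) < n)).trans_lt (by have := hj.pos; omega)
    · unfold arcEnd
      split_ifs
      · omega
      · exact not_lt.mp (Nat.find_min hex (by omega))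

end IsMarking

section MarkedCycle

variable {α : Type*} {q p : ℕ} {j : ℕ → ℕ} {u : ℕ → α} {k t : ℕ}

def ShiftsUnmarked (q p : ℕ) (j : ℕ → ℕ) (u : ℕ → α) (π : Perm α) : Prop :=
  ∀ t, (∀ k < p, t % q ≠ j k) → π (u (t % q)) = u ((t + 1) % q)

def arc (q p : ℕ) (j : ℕ → ℕ) (u : ℕ → α) (k : ℕ) : List α :=
  (List.range' (j k + 1) (arcEnd q p j k - j k)).map fun t => u (t % q)

theorem mem_arc {x : α} :
    x ∈ arc q p j u k ↔ ∃ t, j k < t ∧ t ≤ arcEnd q p j k ∧ u (t % q) = x := by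
  simp only [arc, List.mem_map, List.mem_range'_1]
  constructor
  · rintro ⟨t, ht, rfl⟩
    exact ⟨t, by omega, by omega, rfl⟩
  · rintro ⟨t, ht, ht', rfl⟩
    exact ⟨t, by omega, rfl⟩

theorem formPerm_map_range_apply_mod [DecidableEq α] (hu : Set.InjOn u (Set.Iio q))
    (hq : 0 < q) (t : ℕ) : ((List.range q).map u).formPerm (u (t % q)) = u ((t + 1) % q) := by
  have hnd : ((List.range' 0 q).map u).Nodup :=
    List.Nodup.map_on (fun a ha b hb h => hu (by simpa using ha) (by simpa using hb) h)
      List.nodup_range'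
  have hlt := Nat.mod_lt t hq
  rw [List.range_eq_range', List.formPerm_map_range'_apply u hnd (Nat.zero_le _)
    (by omega : t % q < 0 + q), ← Nat.mod_add_mod t q 1]
  split_ifs
  · rw [show t % q + 1 = q by omega, Nat.mod_self]
  · rw [Nat.mod_eq_of_lt (show t % q + 1 < q by omega)]

theorem formPerm_map_range_apply [DecidableEq α] (hu : Set.InjOn u (Set.Iio q)) {n : ℕ}
    (hn : n < q) : ((List.range q).map u).formPerm (u n) = u ((n + 1) % q) := by
  simpa only [Nat.mod_eq_of_lt hn] using formPerm_map_range_apply_mod hu (by omega) n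

theorem support_formPerm_map_marked_subset [DecidableEq α] [Fintype α] :
    ((List.range p).map fun i => u (j i)).formPerm.support ⊆
      (range p).image fun k => u (j k) := fun x hx => by
  simpa using List.support_formPerm_le _ hx

namespace IsMarking

theorem nodup_map_marked (hj : IsMarking q p j) (hu : Set.InjOn u (Set.Iio q)) :
    ((List.range p).map fun i => u (j i)).Nodup := by
  refine List.Nodup.map_on (fun a ha b hb h => ?_) List.nodup_range
  rw [List.mem_range] at ha hb
  exact hj.strictAntiOn.injOn ha hb (hu (hj.lt a ha) (hj.lt b hb) h)

theorem formPerm_marked_apply [DecidableEq α] (hj : IsMarking q p j)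
    (hu : Set.InjOn u (Set.Iio q)) {m : ℕ} (hm : m < p) :
    ((List.range p).map fun i => u (j i)).formPerm (u (j m)) =
      u (j (if m + 1 = p then 0 else m + 1)) := by
  have hnd := hj.nodup_map_marked hu
  rw [List.range_eq_range'] at hnd ⊢
  simpa using List.formPerm_map_range'_apply (fun i => u (j i)) (t := m) hnd (Nat.zero_le _)
    (by omega)

theorem nodup_arc (hj : IsMarking q p j) (hu : Set.InjOn u (Set.Iio q)) (hk : k < p) :
    (arc q p j u k).Nodup := by
  refine List.Nodup.map_on (fun a ha b hb h => ?_) List.nodup_range'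
  rw [List.mem_range'_1] at ha hb
  exact (hj.eq_of_mod_eq hk (by omega) (by omega) hk (by omega) (by omega)
    (hu (Nat.mod_lt _ hj.q_pos) (Nat.mod_lt _ hj.q_pos) h)).2

theorem formPerm_arc_apply [DecidableEq α] (hj : IsMarking q p j)
    (hu : Set.InjOn u (Set.Iio q)) (hk : k < p) (ht : j k < t) (ht' : t ≤ arcEnd q p j k) :
    (arc q p j u k).formPerm (u (t % q)) =
      u ((if t = arcEnd q p j k then j k + 1 else t + 1) % q) := by
  have h := List.formPerm_map_range'_apply (fun t => u (t % q)) (hj.nodup_arc hu hk)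
    (show j k + 1 ≤ t by omega) (show t < j k + 1 + (arcEnd q p j k - j k) by omega)
  beta_reduce at h
  rw [arc, h]
  congr 2
  split_ifs <;> omega

theorem formPerm_arc_apply_of_ne [DecidableEq α] (hj : IsMarking q p j)
    (hu : Set.InjOn u (Set.Iio q)) (hk : k < p) (ht : j k < t) (ht' : t ≤ arcEnd q p j k)
    {k' : ℕ} (hk' : k' < p) (hkk' : k' ≠ k) :
    (arc q p j u k').formPerm (u (t % q)) = u (t % q) := by
  refine List.formPerm_apply_of_notMem fun hmem => hkk' ?_
  obtain ⟨t', hs, hs', h⟩ := mem_arc.mp hmem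
  exact (hj.eq_of_mod_eq hk' hs hs' hk ht ht'
    (hu (Nat.mod_lt _ hj.q_pos) (Nat.mod_lt _ hj.q_pos) h)).1

theorem shiftsUnmarked_formPerm_mul [DecidableEq α] [Fintype α] (hj : IsMarking q p j)
    (hu : Set.InjOn u (Set.Iio q)) {η : Perm α}
    (hη : η.support ⊆ (range p).image fun k => u (j k)) :
    ShiftsUnmarked q p j u (((List.range q).map u).formPerm * η) := by
  intro t ht
  have hfix : η (u (t % q)) = u (t % q) := by
    refine notMem_support.mp fun hmem => ?_
    obtain ⟨k, hk, h⟩ := mem_image.mp (hη hmem)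
    rw [mem_range] at hk
    exact ht k hk (hu (Nat.mod_lt _ hj.q_pos) (hj.lt k hk) h.symm)
  rw [mul_apply, hfix, formPerm_map_range_apply_mod hu hj.q_pos]

theorem formPerm_mul_formPerm_apply_marked [DecidableEq α] (hj : IsMarking q p j)
    (hu : Set.InjOn u (Set.Iio q)) {m : ℕ} (hm : m < p) :
    (((List.range q).map u).formPerm * ((List.range p).map fun i => u (j i)).formPerm)
      (u (j m)) = u ((j (if m + 1 = p then 0 else m + 1) + 1) % q) := by
  rw [mul_apply, hj.formPerm_marked_apply hu hm,
    formPerm_map_range_apply hu (hj.lt _ (by split_ifs <;> omega))]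

theorem pow_apply_arc (hj : IsMarking q p j) {π : Perm α} (hπ : ShiftsUnmarked q p j u π)
    (hk : k < p) (ht : j k < t) (ht' : t ≤ arcEnd q p j k) :
    (π ^ (arcEnd q p j k - t)) (u (t % q)) = u (j (if k = 0 then p - 1 else k - 1)) := by
  have h := π.pow_apply_eq_of_apply_eq_succ (fun t => u (t % q)) t (n := arcEnd q p j k - t)
    fun s hs hs' => hπ s fun k' hk' => hj.mod_ne_of_lt_arcEnd hk (by omega) (by omega) hk'
  beta_reduce at h
  rw [h, Nat.add_sub_cancel' ht', hj.arcEnd_mod hk]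

theorem pow_apply_of_apply_marked (hj : IsMarking q p j) {π : Perm α}
    (hπ : ShiftsUnmarked q p j u π) (hk : k < p) {x : α} (hx : π x = u ((j k + 1) % q)) :
    (π ^ (arcEnd q p j k - j k)) x = u (j (if k = 0 then p - 1 else k - 1)) := by
  have hlt := hj.lt_arcEnd hk
  rw [show arcEnd q p j k - j k = arcEnd q p j k - (j k + 1) + 1 by omega, pow_succ, mul_apply,
    hx, hj.pow_apply_arc hπ hk (by omega) hlt]

theorem sub_card_support_sub_eq_card_image_marked [DecidableEq α] [Fintype α]
    (hj : IsMarking q p j) (hu : Set.InjOn u (Set.Iio q)) {π : Perm α}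
    [DecidableEq (Quotient (SameCycle.setoid π))] (hπ : ShiftsUnmarked q p j u π)
    (hsupp : π.support ⊆ (range q).image u) :
    q - (#π.support - Multiset.card π.cycleType) =
      #((range p).image fun k => Quotient.mk (SameCycle.setoid π) (u (j k))) := by
  have hcount := π.card_image_sameCycle_add_card_support hsupp
  rw [card_image_of_injOn (fun a ha b hb h => hu (mem_range.mp ha) (mem_range.mp hb) h),
    card_range] at hcount
  have himage : ((range q).image u).image (Quotient.mk (SameCycle.setoid π)) =
      (range p).image fun k => Quotient.mk (SameCycle.setoid π) (u (j k)) := by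
    ext c
    simp only [mem_image, mem_range]
    constructor
    · rintro ⟨_, ⟨n, hn, rfl⟩, rfl⟩
      obtain ⟨k, hk, t, ht, ht', rfl⟩ := hj.exists_mem_arc hn
      refine ⟨if k = 0 then p - 1 else k - 1, by split_ifs <;> omega, Quotient.sound ?_⟩
      have h : SameCycle π (u (t % q)) (u (j (if k = 0 then p - 1 else k - 1))) :=
        ⟨_, by rw [zpow_natCast]; exact hj.pow_apply_arc hπ hk ht ht'⟩
      exact h.symm
    · rintro ⟨k, hk, rfl⟩
      exact ⟨u (j k), ⟨j k, hj.lt k hk, rfl⟩, rfl⟩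
  have hle : #(((range q).image u).image (Quotient.mk (SameCycle.setoid π))) ≤ q :=
    card_image_le.trans (card_image_le.trans (card_range q).le)
  rw [← himage]
  omega

/-- The cycle through `u (j m)` returns after `arcEnd k - j k` steps, meeting only unmarked
points in between. -/
theorem eq_of_sameCycle_of_apply_marked [Finite α] (hj : IsMarking q p j)
    (hu : Set.InjOn u (Set.Iio q)) {π : Perm α} (hπ : ShiftsUnmarked q p j u π) (hk : k < p)
    {m m' : ℕ} (hm : m < p) (hm' : m' < p) (hkm : (if k = 0 then p - 1 else k - 1) = m)
    (hx : π (u (j m)) = u ((j k + 1) % q)) (h : SameCycle π (u (j m)) (u (j m'))) :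
    m = m' := by
  have hL := hj.lt_arcEnd hk
  have hper := hj.pow_apply_of_apply_marked hπ hk hx
  rw [hkm] at hper
  obtain ⟨n, hn, hnm⟩ := h.exists_pow_lt_of_pow_apply_eq_self (by omega) hper
  cases n with
  | zero => exact hj.strictAntiOn.injOn hm hm' (hu (hj.lt m hm) (hj.lt m' hm') hnm)
  | succ n =>
    have hwalk := π.pow_apply_eq_of_apply_eq_succ (fun t => u (t % q)) (j k + 1) (n := n)
      fun s hs hs' => hπ s fun k' hk' => hj.mod_ne_of_lt_arcEnd hk (by omega) (by omega) hk'
    beta_reduce at hwalk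
    rw [pow_succ, mul_apply, hx, hwalk] at hnm
    exact absurd (hu (Nat.mod_lt _ hj.q_pos) (hj.lt m' hm') hnm)
      (hj.mod_ne_of_lt_arcEnd hk (by omega) (by omega) hm')

theorem eq_of_sameCycle_formPerm_mul_formPerm [DecidableEq α] [Fintype α]
    (hj : IsMarking q p j) (hu : Set.InjOn u (Set.Iio q)) {m m' : ℕ} (hm : m < p)
    (hm' : m' < p)
    (h : SameCycle (((List.range q).map u).formPerm *
      ((List.range p).map fun i => u (j i)).formPerm) (u (j m)) (u (j m'))) : m = m' :=
  hj.eq_of_sameCycle_of_apply_marked hu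
    (hj.shiftsUnmarked_formPerm_mul hu support_formPerm_map_marked_subset)
    (k := if m + 1 = p then 0 else m + 1) (by split_ifs <;> omega) hm hm'
    (by by_cases h : m + 1 = p <;> simp only [h, if_true, if_false, Nat.add_one_ne_zero] <;> omega)
    (hj.formPerm_mul_formPerm_apply_marked hu hm) h

theorem eq_formPerm_of_injective_sameCycle [DecidableEq α] [Fintype α] (hj : IsMarking q p j)
    (hu : Set.InjOn u (Set.Iio q)) {η : Perm α}
    (hη : η.support = (range p).image fun k => u (j k))
    (hsep : ∀ m < p, ∀ m' < p,
      SameCycle (((List.range q).map u).formPerm * η) (u (j m)) (u (j m')) → m = m') :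
    η = ((List.range p).map fun i => u (j i)).formPerm := by
  ext x
  by_cases hx : x ∈ η.support
  · obtain ⟨m, hm, rfl⟩ := mem_image.mp (hη ▸ hx)
    obtain ⟨k, hk, hηm⟩ := mem_image.mp (hη ▸ apply_mem_support.mpr hx)
    rw [mem_range] at hm hk
    have hjump : (((List.range q).map u).formPerm * η) (u (j m)) = u ((j k + 1) % q) := by
      rw [mul_apply, ← hηm, formPerm_map_range_apply hu (hj.lt k hk)]
    have hmk := hsep m hm (if k = 0 then p - 1 else k - 1) (by split_ifs <;> omega) ⟨_, by
      rw [zpow_natCast]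
      exact hj.pow_apply_of_apply_marked (hj.shiftsUnmarked_formPerm_mul hu hη.le) hk hjump⟩
    rw [← hηm, hj.formPerm_marked_apply hu hm]
    congr 2
    split_ifs at hmk ⊢ <;> omega
  · rw [notMem_support.mp hx, List.formPerm_apply_of_notMem]
    simp only [List.mem_map, List.mem_range, not_exists, not_and]
    rintro i hi rfl
    exact hx (hη ▸ mem_image_of_mem _ (mem_range.mpr hi))

theorem map_range_append_eq_arc_zero (hj : IsMarking q p j) :
    (List.range' (j 0 + 1) (q - 1 - j 0)).map u ++ (List.range (j (p - 1) + 1)).map u =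
      arc q p j u 0 := by
  have h0 := hj.lt 0 hj.pos
  have hlast := hj.lt (p - 1) (by have := hj.pos; omega)
  rw [arc, arcEnd, if_pos rfl,
    show j (p - 1) + q - j 0 = (q - 1 - j 0) + (j (p - 1) + 1) by omega, ← List.range'_append,
    List.map_append, Nat.one_mul, show j 0 + 1 + (q - 1 - j 0) = q by omega]
  congr 1
  · refine List.map_congr_left fun t ht => ?_
    rw [List.mem_range'_1] at ht
    rw [Nat.mod_eq_of_lt (by omega)]
  · rw [List.range'_eq_map_range, List.map_map]
    refine List.map_congr_left fun i hi => ?_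
    rw [List.mem_range] at hi
    simp only [Function.comp, Nat.add_mod_left, Nat.mod_eq_of_lt (show i < q by omega)]

theorem map_range'_eq_arc_succ (hj : IsMarking q p j) {i : ℕ} (hi : i < p - 1) :
    (List.range' (j (i + 1) + 1) (j i - j (i + 1))).map u = arc q p j u (i + 1) := by
  have := hj.lt i (by omega)
  rw [arc, arcEnd, if_neg (Nat.succ_ne_zero i), Nat.add_sub_cancel]
  refine List.map_congr_left fun t ht => ?_
  rw [List.mem_range'_1] at ht
  rw [Nat.mod_eq_of_lt (by omega)]

theorem formPerm_mul_formPerm_apply_arc [DecidableEq α] [Fintype α] (hj : IsMarking q p j)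
    (hu : Set.InjOn u (Set.Iio q)) (hk : k < p) (ht : j k < t) (ht' : t ≤ arcEnd q p j k) :
    (((List.range q).map u).formPerm * ((List.range p).map fun i => u (j i)).formPerm)
      (u (t % q)) = u ((if t = arcEnd q p j k then j k + 1 else t + 1) % q) := by
  split_ifs with h
  · rw [h, hj.arcEnd_mod hk, hj.formPerm_mul_formPerm_apply_marked hu (by split_ifs <;> omega),
      show (if (if k = 0 then p - 1 else k - 1) + 1 = p then 0
        else (if k = 0 then p - 1 else k - 1) + 1) = k by split_ifs <;> omega]
  · exact hj.shiftsUnmarked_formPerm_mul hu support_formPerm_map_marked_subset t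
      fun k' hk' => hj.mod_ne_of_lt_arcEnd hk ht (lt_of_le_of_ne ht' h) hk'

theorem formPerm_mul_formPerm_eq [DecidableEq α] [Fintype α] (hj : IsMarking q p j)
    (hu : Set.InjOn u (Set.Iio q)) :
    ((List.range q).map u).formPerm * ((List.range p).map fun i => u (j i)).formPerm =
      (((List.range' (j 0 + 1) (q - 1 - j 0)).map u ++
          (List.range (j (p - 1) + 1)).map u).formPerm) *
        ((List.range (p - 1)).reverse.map
          (fun i => ((List.range' (j (i + 1) + 1) (j i - j (i + 1))).map u).formPerm)).prod := by
  set K := 0 :: (List.range (p - 1)).reverse.map (· + 1) with hKdef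
  have hK : ∀ k, k ∈ K ↔ k < p := fun k => by
    simp only [K, List.mem_cons, List.mem_map, List.mem_reverse, List.mem_range]
    have := hj.pos
    constructor
    · rintro (rfl | ⟨i, hi, rfl⟩) <;> omega
    · intro hk
      rcases k with _ | k
      · exact Or.inl rfl
      · exact Or.inr ⟨k, by omega, rfl⟩
  have hKnd : K.Nodup := List.nodup_cons.mpr ⟨by simp,
    (List.nodup_reverse.mpr List.nodup_range).map fun _ _ h => Nat.succ_injective h⟩
  have hP : (((List.range' (j 0 + 1) (q - 1 - j 0)).map u ++
          (List.range (j (p - 1) + 1)).map u).formPerm) *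
        ((List.range (p - 1)).reverse.map
          (fun i => ((List.range' (j (i + 1) + 1) (j i - j (i + 1))).map u).formPerm)).prod =
      (K.map fun k => (arc q p j u k).formPerm).prod := by
    rw [hj.map_range_append_eq_arc_zero, hKdef, List.map_cons, List.prod_cons, List.map_map]
    congr 2
    refine List.map_congr_left fun i hi => ?_
    rw [List.mem_reverse, List.mem_range] at hi
    simp only [Function.comp, hj.map_range'_eq_arc_succ hi]
  rw [hP]
  ext x
  by_cases hx : ∃ n < q, u n = x
  · obtain ⟨n, hn, rfl⟩ := hx
    obtain ⟨k, hk, t, ht, ht', rfl⟩ := hj.exists_mem_arc hn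
    have hnext : j k < (if t = arcEnd q p j k then j k + 1 else t + 1) ∧
        (if t = arcEnd q p j k then j k + 1 else t + 1) ≤ arcEnd q p j k := by
      have := hj.lt_arcEnd hk
      split_ifs <;> omega
    rw [List.prod_map_apply_eq_of_forall_ne _ hKnd ((hK k).mpr hk),
      hj.formPerm_arc_apply hu hk ht ht', hj.formPerm_mul_formPerm_apply_arc hu hk ht ht']
    intro i hi hik
    rw [hj.formPerm_arc_apply hu hk ht ht']
    exact ⟨hj.formPerm_arc_apply_of_ne hu hk ht ht' ((hK i).mp hi) hik,
      hj.formPerm_arc_apply_of_ne hu hk hnext.1 hnext.2 ((hK i).mp hi) hik⟩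
  · have hμ : x ∉ (List.range q).map u := by
      simpa only [List.mem_map, List.mem_range] using hx
    have hc : x ∉ (List.range p).map fun i => u (j i) := by
      simp only [List.mem_map, List.mem_range, not_exists, not_and]
      exact fun i hi h => hx ⟨j i, hj.lt i hi, h⟩
    rw [mul_apply, List.formPerm_apply_of_notMem hc, List.formPerm_apply_of_notMem hμ,
      List.prod_map_apply_eq_self]
    intro k _
    refine List.formPerm_apply_of_notMem fun hmem => hx ?_
    obtain ⟨t, -, -, h⟩ := mem_arc.mp hmem
    exact ⟨t % q, Nat.mod_lt _ hj.q_pos, h⟩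

end IsMarking

end MarkedCycle

theorem cycle_mul_index_characterization_general (d q p : ℕ) (hp : 1 ≤ p)
    (u : ℕ → Fin d) (hu : ((List.range q).map u).Nodup)
    (j : ℕ → ℕ) (hjq : ∀ i < p, j i < q)
    (hanti : ∀ i i', i < i' → i' < p → j i' < j i)
    (μ : Perm (Fin d)) (hμ : μ = ((List.range q).map u).formPerm)
    (η : Perm (Fin d))
    (hη : η.support = (Finset.range p).image (fun i => u (j i)))
    (s : ℕ) (hs : s = q - ((μ * η).support.card - (μ * η).cycleType.card)) :
    s ≤ p ∧
    ((s = p) ↔ η = ((List.range p).map (fun i => u (j i))).formPerm) ∧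
    ((s = p) ↔ μ * η =
      (((List.range' (j 0 + 1) (q - 1 - j 0)).map u ++
          (List.range (j (p - 1) + 1)).map u).formPerm) *
        ((List.range (p - 1)).reverse.map
          (fun i => ((List.range' (j (i + 1) + 1) (j i - j (i + 1))).map u).formPerm)).prod) := by
  classical
  subst hμ
  have hj : IsMarking q p j := ⟨hp, hjq, fun a ha b hb hab => hanti a b hab hb⟩
  have hinj : Set.InjOn u (Set.Iio q) := fun a ha b hb h =>
    List.inj_on_of_nodup_map hu (List.mem_range.mpr ha) (List.mem_range.mpr hb) h
  have hsupp : (((List.range q).map u).formPerm * η).support ⊆ (range q).image u := by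
    refine (support_mul_le _ _).trans (union_subset (fun x hx => ?_) (hη.le.trans ?_))
    · simpa using List.support_formPerm_le _ hx
    · exact image_subset_iff.mpr fun k hk =>
        mem_image_of_mem _ (mem_range.mpr (hj.lt k (mem_range.mp hk)))
  rw [hj.sub_card_support_sub_eq_card_image_marked hinj
    (hj.shiftsUnmarked_formPerm_mul hinj hη.le) hsupp] at hs
  have h12 : s = p ↔ η = ((List.range p).map (fun i => u (j i))).formPerm := by
    have hcard := card_image_iff (s := range p) (f := fun k =>
      Quotient.mk (SameCycle.setoid (((List.range q).map u).formPerm * η)) (u (j k)))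
    rw [card_range] at hcard
    rw [hs, hcard]
    simp only [Set.InjOn, coe_range, Set.mem_Iio, Quotient.eq]
    exact ⟨hj.eq_formPerm_of_injective_sameCycle hinj hη, fun h m hm m' hm' => by
      subst h
      exact hj.eq_of_sameCycle_formPerm_mul_formPerm hinj hm hm'⟩
  have h23 := hj.formPerm_mul_formPerm_eq hinj
  refine ⟨hs ▸ card_image_le.trans (card_range p).le, h12, h12.trans ?_⟩
  exact ⟨fun h => h ▸ h23, fun h => mul_left_cancel (h.trans h23.symm)⟩

/-- **Lemma 3.6.** Let `μ = (u₁ u₂ ⋯ u_q)` be a `q`-cycle (here `u` is 0-indexed: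
`μ` is the cycle on the distinct points `u 0, …, u (q-1)`), and let `η` be a permutation
with `supp(η) = {u_{j₁}, …, u_{j_p}}` where `j 0 > j 1 > ⋯ > j (p-1)` (0-indexed
positions, all `< q`). Let `s = q − ι(μη)` be the number of disjoint cycles (counting
fixed points inside `supp μ` as 1-cycles) of `μη` on `supp(μ)`, where
`ι(π) = |supp π| − (number of nontrivial cycles of π)`. Then `s ≤ p`, and
`s = p` ↔ `η = (u_{j₁} u_{j₂} ⋯ u_{j_p})` ↔
`μη = (u_{j₁+1} ⋯ u_q u_1 ⋯ u_{j_p})(u_{j_p+1} ⋯ u_{j_{p-1}}) ⋯ (u_{j₂+1} ⋯ u_{j₁})`. -/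
theorem cycle_mul_index_characterization (d q p : ℕ) (hq : 2 ≤ q) (hp : 1 ≤ p)
    (u : ℕ → Fin d) (hu : ((List.range q).map u).Nodup)
    (j : ℕ → ℕ) (hjq : ∀ i < p, j i < q)
    (hanti : ∀ i i', i < i' → i' < p → j i' < j i)
    (μ : Perm (Fin d)) (hμ : μ = ((List.range q).map u).formPerm)
    (η : Perm (Fin d))
    (hη : η.support = (Finset.range p).image (fun i => u (j i)))
    (s : ℕ) (hs : s = q - ((μ * η).support.card - (μ * η).cycleType.card)) :
    s ≤ p ∧
    ((s = p) ↔ η = ((List.range p).map (fun i => u (j i))).formPerm) ∧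
    ((s = p) ↔ μ * η =
      (((List.range' (j 0 + 1) (q - 1 - j 0)).map u ++
          (List.range (j (p - 1) + 1)).map u).formPerm) *
        ((List.range (p - 1)).reverse.map
          (fun i => ((List.range' (j (i + 1) + 1) (j i - j (i + 1))).map u).formPerm)).prod) :=
  cycle_mul_index_characterization_general d q p hp u hu j hjq hanti μ hμ η hη s hs
end

section
/- Suppose ∑_{j=1}^{r-1} (e_j − 1) = d − 1 and (σ_1, ..., σ_{r-1}) is a factorization of the d-cycle τ = (1 2 ⋯ d) of type (e_1, ..., e_{r-1}). Then for each 1 ≤ j ≤ r−1 the elements of σ_j appear clockwise on C_τ; that is, there exist integers 1 ≤ c_1 < c_2 < ... < c_{e_j} ≤ d such that σ_j is the cycle (c_1 c_2 ⋯ c_{e_j}). -/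
open Equiv Equiv.Perm

/-!
Fix `j`, write `σ = σ_j` and `π = σ⁻¹ τ`, and let `S` be the support of `σ`.

Multiplying a permutation by a transposition changes its number of orbits by at most one, and an
`e`-cycle is a product of `e - 1` transpositions. After conjugating the factors to the left of `σ`,
`π` is a product of the other factors, hence of `d - e_j` transpositions, so it has at least `e_j`
orbits.

Since `π z = σ⁻¹ (z + 1)`, the `π`-orbit of any point walks clockwise until it reaches `y - 1` for the
first point `y ∈ S` ahead of it. So each of the at least `e_j` orbits contains one of the `e_j`
points `s - 1` with `s ∈ S`, and therefore exactly one. For `x ∈ S` both `σ x - 1` (as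
`π (σ x - 1) = x`) and `y - 1`, with `y` the next point of `S` clockwise from `x`, lie in the orbit
of `x`; hence `σ x = y`, i.e. `σ` runs through `S` in increasing cyclic order.
-/

lemma inv_mul_prod_append_cons {G : Type*} [Group G] (P D : List G) (c : G) :
    c⁻¹ * (P ++ c :: D).prod = (P.map (MulAut.conj c⁻¹) ++ D).prod := by
  simp [List.prod_append, ← map_list_prod, mul_assoc]

namespace Setoid

variable {α : Type*}

def mergeClasses (s : Setoid α) (a b : α) : Setoid α where
  r x y := s x y ∨ ((s x a ∨ s x b) ∧ (s y a ∨ s y b))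
  iseqv := by
    have trans : ∀ {u v w}, s u v → s v w → s u w := s.trans
    have symm : ∀ {u v}, s u v → s v u := s.symm
    exact ⟨fun x => Or.inl (s.refl x), by grind, by grind⟩

lemma le_mergeClasses (s : Setoid α) (a b : α) : s ≤ s.mergeClasses a b :=
  fun _ _ h => Or.inl h

lemma mergeClasses_rel_swap_apply [DecidableEq α] (s : Setoid α) (a b x : α) :
    s.mergeClasses a b x (swap a b x) := by
  rcases eq_or_ne x a with rfl | hxa
  · exact Or.inr ⟨Or.inl (s.refl x), by simp⟩
  rcases eq_or_ne x b with rfl | hxb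
  · exact Or.inr ⟨Or.inr (s.refl x), by simp⟩
  simp [swap_apply_of_ne_of_ne hxa hxb]

lemma mergeClasses_rel_iff_of_not_rel {s : Setoid α} {a b x y : α} (hx : ¬s x b) (hy : ¬s y b) :
    s.mergeClasses a b x y ↔ s x y := by
  refine ⟨fun h => h.elim id fun ⟨hxa, hya⟩ => ?_, fun h => Or.inl h⟩
  exact s.trans (hxa.resolve_right hx) (s.symm (hya.resolve_right hy))

lemma card_quotient_le_card_quotient_mergeClasses_add_one [Finite α] (s : Setoid α) (a b : α) :
    Nat.card (Quotient s) ≤ Nat.card (Quotient (s.mergeClasses a b)) + 1 := by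
  classical
  let F : Quotient s → Option (Quotient (s.mergeClasses a b)) := fun c =>
    if c = ⟦b⟧ then none else some (Quotient.map id (s.le_mergeClasses a b) c)
  have hF : F.Injective := by
    intro c c'
    induction c using Quotient.ind with | _ x => ?_
    induction c' using Quotient.ind with | _ y => ?_
    by_cases hx : s x b <;> by_cases hy : s y b
    · exact fun _ => Quotient.sound (s.trans hx (s.symm hy))
    all_goals simp [F, Quotient.eq, hx, hy, mergeClasses_rel_iff_of_not_rel]
  simpa using Nat.card_le_card_of_injective F hF

end Setoid

namespace Equiv.Perm

variable {α : Type*}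

lemma SameCycle.setoid_le_of_forall_rel_apply [Finite α] {s : Setoid α} {f : Perm α}
    (h : ∀ x, s x (f x)) : SameCycle.setoid f ≤ s := by
  intro x y hxy
  obtain ⟨i, rfl⟩ := hxy.exists_nat_pow_eq
  clear hxy
  induction i with
  | zero => exact s.refl x
  | succ i ih => exact s.trans ih (by rw [pow_succ', mul_apply]; exact h _)

noncomputable def numOrbits (f : Perm α) : ℕ := Nat.card (Quotient (SameCycle.setoid f))

lemma numOrbits_one : numOrbits (1 : Perm α) = Nat.card α := by
  refine Nat.card_congr (Equiv.ofBijective _ ⟨fun x y h => ?_, Quotient.mk_surjective⟩).symm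
  exact sameCycle_one.mp (Quotient.exact h)

lemma isSwap_of_mem_zipWith_swap_tail [DecidableEq α] {l : List α} (hl : l.Nodup) {t : Perm α}
    (ht : t ∈ List.zipWith swap l l.tail) : t.IsSwap := by
  obtain ⟨i, hi, rfl⟩ := List.mem_iff_getElem.mp ht
  simp only [List.length_zipWith, List.length_tail] at hi
  rw [List.getElem_zipWith, List.getElem_tail]
  exact ⟨_, _, fun h => by simpa using hl.getElem_inj_iff.mp h, rfl⟩

lemma IsCycle.exists_isSwap_prod_eq [Fintype α] [DecidableEq α] {c : Perm α} (hc : c.IsCycle) :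
    ∃ w : List (Perm α), (∀ t ∈ w, t.IsSwap) ∧ w.prod = c ∧ w.length = c.support.card - 1 := by
  obtain ⟨x, hx, -⟩ := id hc
  have hcx : c.cycleOf x = c := hc.cycleOf_eq hx
  refine ⟨List.zipWith swap (c.toList x) (c.toList x).tail,
    fun t ht => isSwap_of_mem_zipWith_swap_tail (c.nodup_toList x) ht, ?_, ?_⟩
  · -- `List.formPerm l` is defined as this product of transpositions
    rw [← List.formPerm, formPerm_toList, hcx]
  · rw [List.length_zipWith, List.length_tail, length_toList, hcx, min_eq_right (Nat.sub_le _ _)]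

variable [Finite α] [DecidableEq α]

lemma numOrbits_le_numOrbits_swap_mul_add_one (f : Perm α) (a b : α) :
    numOrbits f ≤ numOrbits (swap a b * f) + 1 := by
  set s := SameCycle.setoid f
  have hle : SameCycle.setoid (swap a b * f) ≤ s.mergeClasses a b :=
    SameCycle.setoid_le_of_forall_rel_apply fun x =>
      (s.mergeClasses a b).trans (s.le_mergeClasses a b ⟨1, by simp⟩)
        (s.mergeClasses_rel_swap_apply a b (f x))
  calc numOrbits f ≤ Nat.card (Quotient (s.mergeClasses a b)) + 1 :=
        s.card_quotient_le_card_quotient_mergeClasses_add_one a b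
    _ ≤ numOrbits (swap a b * f) + 1 := by
        gcongr
        exact Nat.card_le_card_of_surjective _ (Quotient.map_surjective hle Function.surjective_id)

lemma numOrbits_le_numOrbits_prod_mul_add_length {w : List (Perm α)} (hw : ∀ t ∈ w, t.IsSwap)
    (f : Perm α) : numOrbits f ≤ numOrbits (w.prod * f) + w.length := by
  induction w with
  | nil => simp
  | cons t w ih =>
    obtain ⟨a, b, -, rfl⟩ := hw t List.mem_cons_self
    have := numOrbits_le_numOrbits_swap_mul_add_one (w.prod * f) a b
    have := ih fun t ht => hw t (List.mem_cons_of_mem _ ht)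
    simp only [List.prod_cons, List.length_cons, mul_assoc]
    omega

variable [Fintype α]

lemma card_le_numOrbits_prod_add_sum {L : List (Perm α)} (hL : ∀ c ∈ L, c.IsCycle) :
    Nat.card α ≤ numOrbits L.prod + (L.map fun c => c.support.card - 1).sum := by
  induction L with
  | nil => simp [numOrbits_one]
  | cons c L ih =>
    obtain ⟨w, hw, hwc, hwlen⟩ := (hL c List.mem_cons_self).exists_isSwap_prod_eq
    have := numOrbits_le_numOrbits_prod_mul_add_length hw L.prod
    have := ih fun c hc => hL c (List.mem_cons_of_mem _ hc)
    simp only [List.prod_cons, List.map_cons, List.sum_cons]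
    rw [← hwlen, ← hwc]
    omega

lemma card_support_le_numOrbits_inv_mul {L : List (Perm α)} (hL : ∀ c ∈ L, c.IsCycle)
    (hsum : (L.map fun c => c.support.card - 1).sum + 1 = Nat.card α) {c : Perm α}
    (hc : c ∈ L) : c.support.card ≤ numOrbits (c⁻¹ * L.prod) := by
  obtain ⟨P, D, rfl⟩ := List.append_of_mem hc
  have hbound := card_le_numOrbits_prod_add_sum (L := P.map (MulAut.conj c⁻¹) ++ D) (by
    simp only [List.mem_append, List.mem_map]
    rintro _ (⟨g, hg, rfl⟩ | hg)
    · exact (hL g (by simp [hg])).conj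
    · exact hL _ (by simp [hg]))
  rw [← inv_mul_prod_append_cons] at hbound
  have := (hL c (by simp)).two_le_card_support
  simp only [List.map_append, List.map_map, Function.comp_def, MulAut.conj_apply,
    card_support_conj, List.sum_append, List.map_cons, List.sum_cons] at hsum hbound
  omega

end Equiv.Perm

section Clockwise

variable {n : ℕ}

/-- `(z - (x + 1)).val` is the number of clockwise steps from `x + 1` to `z`, so `y` is the first
point of `S` after `x` in clockwise order, `x` itself coming last. -/
def IsNextClockwise (S : Finset (Fin (n + 1))) (x y : Fin (n + 1)) : Prop :=
  y ∈ S ∧ ∀ z ∈ S, (y - (x + 1)).val ≤ (z - (x + 1)).val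

lemma IsNextClockwise.unique {S : Finset (Fin (n + 1))} {x y y' : Fin (n + 1)}
    (h : IsNextClockwise S x y) (h' : IsNextClockwise S x y') : y = y' :=
  sub_left_inj.mp (Fin.ext (le_antisymm (h.2 y' h'.1) (h'.2 y h.1)))

lemma exists_isNextClockwise {S : Finset (Fin (n + 1))} (hS : S.Nonempty) (x : Fin (n + 1)) :
    ∃ y, IsNextClockwise S x y :=
  S.exists_min_image (fun z => (z - (x + 1)).val) hS

lemma Fin.val_sub_eq_ite (a b : Fin (n + 1)) :
    (b - a).val = if a ≤ b then b.val - a.val else n + 1 + b.val - a.val := by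
  split_ifs with h
  · exact Fin.coe_sub_iff_le.mpr h
  · exact Fin.coe_sub_iff_lt.mpr (not_le.mp h)

lemma isNextClockwise_formPerm_sort {S : Finset (Fin (n + 1))} {x : Fin (n + 1)} (hx : x ∈ S) :
    IsNextClockwise S x ((S.sort (· ≤ ·)).formPerm x) := by
  set l := S.sort (· ≤ ·)
  have hl : l.SortedLT := S.sortedLT_sort
  have hmem (z : Fin (n + 1)) : z ∈ l ↔ z ∈ S := S.mem_sort (· ≤ ·)
  obtain ⟨i, hi, rfl⟩ := List.getElem_of_mem ((hmem x).mpr hx)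
  obtain ⟨j, hj, hform, hji⟩ : ∃ j, ∃ hj : j < l.length,
      l.formPerm l[i] = l[j] ∧ (j = i + 1 ∨ j = 0 ∧ i + 1 = l.length) := by
    refine ⟨_, Nat.mod_lt _ (by omega), List.formPerm_apply_getElem _ hl.nodup i hi, ?_⟩
    rcases Nat.lt_or_ge (i + 1) l.length with h | h
    · exact Or.inl (Nat.mod_eq_of_lt h)
    · exact Or.inr ⟨by rw [show i + 1 = l.length by omega, Nat.mod_self], by omega⟩
  rw [hform]
  refine ⟨(hmem _).mp (List.getElem_mem _), fun z hz => ?_⟩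
  obtain ⟨m, hm, rfl⟩ := List.getElem_of_mem ((hmem z).mpr hz)
  have hmi := hl.getElem_le_getElem_iff (i := m) (j := i) (hi := hm) (hj := hi)
  have hjm := hl.getElem_le_getElem_iff (i := j) (j := m) (hi := hj) (hj := hm)
  have hij := hl.getElem_lt_getElem_iff (i := i) (j := j) (hi := hi) (hj := hj)
  have := l[j].isLt
  rw [Fin.val_sub_eq_ite, Fin.val_sub_eq_ite]
  simp only [Fin.le_def, Fin.lt_def, Fin.val_add_one, Fin.ext_iff, Fin.val_last] at hmi hjm hij ⊢
  split_ifs <;> omega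

end Clockwise

namespace Equiv.Perm

variable {n : ℕ}

open Fin.NatCast

lemma pow_inv_mul_finRotate_apply {σ : Perm (Fin (n + 1))} {x : Fin (n + 1)} {m : ℕ}
    (hm : ∀ j < m, x + ((j + 1 : ℕ) : Fin (n + 1)) ∉ σ.support) :
    ((σ⁻¹ * finRotate (n + 1)) ^ m) x = x + m := by
  induction m with
  | zero => simp
  | succ m ih =>
    rw [pow_succ', mul_apply, ih fun j hj => hm j (by omega), mul_apply, finRotate_apply,
      add_assoc, ← Nat.cast_add_one, inv_eq_iff_eq]
    exact (notMem_support.mp (hm m (by omega))).symm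

lemma sameCycle_sub_one_of_isNextClockwise {σ : Perm (Fin (n + 1))} {x y : Fin (n + 1)}
    (h : IsNextClockwise σ.support x y) : (σ⁻¹ * finRotate (n + 1)).SameCycle x (y - 1) := by
  refine ⟨(y - (x + 1)).val, ?_⟩
  rw [zpow_natCast, pow_inv_mul_finRotate_apply fun j hj hmem => ?_]
  · rw [Fin.cast_val_eq_self]
    abel
  · have hmin := h.2 _ hmem
    have := (y - (x + 1)).isLt
    rw [Nat.cast_add_one, add_sub_add_comm, sub_self, add_sub_cancel_right, zero_add,
      Fin.val_natCast, Nat.mod_eq_of_lt (by omega)] at hmin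
    omega

lemma sameCycle_apply_sub_one (σ : Perm (Fin (n + 1))) (x : Fin (n + 1)) :
    (σ⁻¹ * finRotate (n + 1)).SameCycle x (σ x - 1) :=
  SameCycle.symm ⟨1, by simp⟩

lemma isNextClockwise_apply_of_card_support_le {σ : Perm (Fin (n + 1))}
    (h : σ.support.card ≤ numOrbits (σ⁻¹ * finRotate (n + 1))) {x : Fin (n + 1)}
    (hx : x ∈ σ.support) : IsNextClockwise σ.support x (σ x) := by
  classical
  let orbit : Fin (n + 1) → Quotient (SameCycle.setoid (σ⁻¹ * finRotate (n + 1))) :=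
    fun z => ⟦z - 1⟧
  have hinj : Set.InjOn orbit σ.support := by
    refine Finset.injOn_of_surjOn_of_card_le orbit (t := Finset.univ)
      (fun _ _ => Finset.mem_coe.mpr (Finset.mem_univ _)) ?_
      (by simpa [numOrbits, Nat.card_eq_fintype_card] using h)
    rintro ⟨z⟩ -
    obtain ⟨y, hy⟩ := exists_isNextClockwise ⟨x, hx⟩ z
    exact ⟨y, hy.1, Quotient.sound (sameCycle_sub_one_of_isNextClockwise hy).symm⟩
  obtain ⟨y, hy⟩ := exists_isNextClockwise ⟨x, hx⟩ x
  have hσx : orbit (σ x) = orbit y := Quotient.sound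
    ((sameCycle_apply_sub_one σ x).symm.trans (sameCycle_sub_one_of_isNextClockwise hy))
  rwa [hinj (apply_mem_support.mpr hx) hy.1 hσx]

lemma eq_formPerm_sort_of_card_support_le {σ : Perm (Fin (n + 1))}
    (h : σ.support.card ≤ numOrbits (σ⁻¹ * finRotate (n + 1))) :
    σ = (σ.support.sort (· ≤ ·)).formPerm := by
  ext x
  by_cases hx : x ∈ σ.support
  · exact congrArg Fin.val ((isNextClockwise_apply_of_card_support_le h hx).unique
      (isNextClockwise_formPerm_sort hx))
  · rw [notMem_support.mp hx, List.formPerm_apply_of_notMem (by simpa using hx)]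

end Equiv.Perm

theorem factorization_cycles_clockwise_general (d r : ℕ)
    (e : Fin (r - 1) → ℕ)
    (hsum : ∑ j, (e j - 1) = d - 1)
    (σ : Fin (r - 1) → Perm (Fin d))
    (hσ : (∀ j, (σ j).IsCycle ∧ (σ j).support.card = e j) ∧
      (List.ofFn σ).prod = finRotate d) :
    ∀ j : Fin (r - 1), ∃ l : List (Fin d),
      l.length = e j ∧ l.Pairwise (· < ·) ∧ σ j = l.formPerm := by
  obtain ⟨hcycle, hprod⟩ := hσ
  intro j
  obtain ⟨x, -⟩ := (hcycle j).1
  obtain ⟨n, rfl⟩ : ∃ n, d = n + 1 := Nat.exists_eq_succ_of_ne_zero x.pos.ne'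
  have hcard : (σ j).support.card ≤ numOrbits ((σ j)⁻¹ * finRotate (n + 1)) := by
    rw [← hprod]
    refine card_support_le_numOrbits_inv_mul (fun c hc => ?_) ?_ (List.mem_ofFn.mpr ⟨j, rfl⟩)
    · obtain ⟨i, rfl⟩ := List.mem_ofFn.mp hc
      exact (hcycle i).1
    · simp [List.sum_ofFn, hcycle, hsum]
  refine ⟨_, ?_, (σ j).support.sortedLT_sort.pairwise, eq_formPerm_sort_of_card_support_le hcard⟩
  rw [Finset.length_sort, (hcycle j).2]

/-- **Corollary 3.10(i).** Assume `∑ (e_j - 1) = d - 1` and let `(σ₁, …, σ_{r-1})` be a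
factorization of the `d`-cycle `τ = (1 2 ⋯ d)` (modelled as `finRotate d = (0 1 ⋯ d-1)`
on `Fin d`) of type `(e₁, …, e_{r-1})`. Then for each `j` the elements of `σ_j` appear
clockwise on `C_τ`: `σ_j` is the cycle `(c₁ c₂ ⋯ c_{e_j})` for some increasing
`c₁ < c₂ < ⋯ < c_{e_j}`. -/
theorem factorization_cycles_clockwise (d r : ℕ) (hd : 2 ≤ d) (hr : 2 ≤ r)
    (e : Fin (r - 1) → ℕ) (he : ∀ j, 2 ≤ e j)
    (hsum : ∑ j, (e j - 1) = d - 1)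
    (σ : Fin (r - 1) → Perm (Fin d))
    (hσ : (∀ j, (σ j).IsCycle ∧ (σ j).support.card = e j) ∧
      (List.ofFn σ).prod = finRotate d) :
    ∀ j : Fin (r - 1), ∃ l : List (Fin d),
      l.length = e j ∧ l.Pairwise (· < ·) ∧ σ j = l.formPerm :=
  factorization_cycles_clockwise_general d r e hsum σ hσ
end

section
/- Let γ be a cycle in S_d, S' ⊆ S, and let G be an S'-supp(γ) bipartite tree. Let s ∈ S'. If every [d]-vertex incident to s has the counterclockwise increasing consecutive partition property (CICPP) on (G, γ), then s has the consecutive partition property (CPP) on (G, γ). -/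
open Equiv Equiv.Perm SimpleGraph

/-!
Let `ν` be the neighbour of `s` on the tree path to `x`. In a tree, the branch at `s` containing
`ν` is everything except the branch at `ν` containing `s`; so the `[d]`-vertices of the component
of `x` are `supp γ` minus the piece that CICPP at `ν` assigns to `s`. That piece misses `ν`, and
the complement on the circle of an arc missing a point is again an arc.
-/

section DeleteVertex

variable {V : Type*} {G : SimpleGraph V} {u v w a b x y : V}

lemma delV_adj : (delV G v).Adj a b ↔ G.Adj a b ∧ a ≠ v ∧ b ≠ v := by
  simp [delV, Sym2.mem_iff, eq_comm, and_comm]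

lemma delV_le_deleteEdges {e : Sym2 V} (hv : v ∈ e) : delV G v ≤ G.deleteEdges {e} :=
  deleteEdges_anti (Set.singleton_subset_iff.mpr hv)

lemma SimpleGraph.Reachable.mem_of_adj_closed {S : Set V}
    (hS : ∀ ⦃x y⦄, G.Adj x y → x ∈ S → y ∈ S) (h : G.Reachable a b) (ha : a ∈ S) : b ∈ S := by
  obtain ⟨p⟩ := h
  induction p with
  | nil => exact ha
  | cons hadj _ ih => exact ih (hS hadj ha)

lemma not_reachable_delV (ha : a ≠ v) : ¬ (delV G v).Reachable a v :=
  fun h => h.mem_of_adj_closed (S := {x | x ≠ v}) (fun _ _ hxy _ => (delV_adj.mp hxy).2.2) ha rfl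

lemma SimpleGraph.Reachable.delV_of_adj (h : (delV G v).Reachable a x) (ha : a ≠ v)
    (hxy : G.Adj x y) (hy : y ≠ v) : (delV G v).Reachable a y :=
  h.trans (delV_adj.mpr ⟨hxy, fun hx => not_reachable_delV ha (hx ▸ h), hy⟩).reachable

lemma exists_adj_reachable_delV (h : G.Reachable u w) (hw : w ≠ u) :
    ∃ v, G.Adj u v ∧ (delV G u).Reachable v w := by
  refine (h.mem_of_adj_closed (S := {w | w = u ∨ ∃ v, G.Adj u v ∧ (delV G u).Reachable v w})
    ?_ (Or.inl rfl)).resolve_left hw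
  rintro x y hxy (rfl | ⟨v, huv, hvx⟩)
  · exact Or.inr ⟨y, hxy, Reachable.rfl⟩
  · by_cases hy : y = u
    · exact Or.inl hy
    · exact Or.inr ⟨v, huv, hvx.delV_of_adj huv.ne.symm hxy hy⟩

lemma reachable_delV_or_reachable_delV (huv : G.Adj u v) (h : G.Reachable u w) :
    (delV G u).Reachable v w ∨ (delV G v).Reachable u w := by
  refine h.mem_of_adj_closed
    (S := {w | (delV G u).Reachable v w ∨ (delV G v).Reachable u w}) ?_ (Or.inr .rfl)
  rintro x y hxy (hvx | hux)
  · by_cases hy : y = u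
    · exact Or.inr (hy ▸ Reachable.rfl)
    · exact Or.inl (hvx.delV_of_adj huv.ne.symm hxy hy)
  · by_cases hy : y = v
    · exact Or.inl (hy ▸ Reachable.rfl)
    · exact Or.inr (hux.delV_of_adj huv.ne hxy hy)

/-- A vertex in both branches would connect `u` and `v` without using the bridge `uv`. -/
lemma SimpleGraph.IsAcyclic.not_reachable_delV_and_reachable_delV (hG : G.IsAcyclic)
    (huv : G.Adj u v) : ¬ ((delV G u).Reachable v w ∧ (delV G v).Reachable u w) := by
  rintro ⟨hvw, huw⟩
  refine isBridge_iff.mp (isAcyclic_iff_forall_adj_isBridge.mp hG huv) ?_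
  exact (huw.mono (delV_le_deleteEdges (Sym2.mem_mk_right u v))).trans
    (hvw.mono (delV_le_deleteEdges (Sym2.mem_mk_left u v))).symm

lemma SimpleGraph.IsAcyclic.reachable_delV_iff (hG : G.IsAcyclic) (huv : G.Adj u v)
    (h : G.Reachable u w) : (delV G u).Reachable v w ↔ ¬ (delV G v).Reachable u w :=
  ⟨fun hvw huw => hG.not_reachable_delV_and_reachable_delV huv ⟨hvw, huw⟩,
    (reachable_delV_or_reachable_delV huv h).resolve_right⟩

lemma SimpleGraph.IsAcyclic.of_induce {A : Set V} (hA : ∀ v w, G.Adj v w → v ∈ A)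
    (h : (G.induce A).IsAcyclic) : G.IsAcyclic := by
  intro v c hc
  have hcA : ∀ x ∈ c.support, x ∈ A := by
    intro x hx
    obtain ⟨e, he, hxe⟩ := (Walk.mem_support_iff_exists_mem_edges_of_not_nil hc.not_nil).mp hx
    induction e with
    | h p q =>
      have hpq : G.Adj p q := c.edges_subset_edgeSet he
      rcases Sym2.mem_iff.mp hxe with rfl | rfl
      exacts [hA _ _ hpq, hA _ _ hpq.symm]
  refine h (c.induce A hcA) ?_
  rw [← Walk.isCycle_map_iff_of_injective (f := (Embedding.induce A).toHom) Subtype.val_injective,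
    Walk.map_induce]
  exact hc

end DeleteVertex

section Circle

variable {α : Type*} {f : Perm α} {s : Finset α} {a : α}

lemma Equiv.Perm.IsCycleOn.coe_eq_image_pow_apply (hf : f.IsCycleOn s) (ha : a ∈ s) :
    (s : Set α) = (fun i => (f ^ i) a) '' Set.Iio s.card := by
  ext b
  constructor
  · intro hb
    obtain ⟨n, hn, rfl⟩ := hf.exists_pow_eq ha hb
    exact ⟨n, hn, rfl⟩
  · rintro ⟨n, -, rfl⟩
    exact hf.1.mapsTo.perm_pow n ha

lemma Equiv.Perm.IsCycleOn.injOn_pow_apply (hf : f.IsCycleOn s) (ha : a ∈ s) :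
    Set.InjOn (fun i => (f ^ i) a) (Set.Iio s.card) :=
  fun _ hi _ hj hij => ((hf.pow_apply_eq_pow_apply ha).mp hij).eq_of_lt_of_lt hi hj

lemma Equiv.Perm.IsCycleOn.diff_image_pow_apply (hf : f.IsCycleOn s) (ha : a ∈ s) {m : ℕ}
    {b : α} (hb : b ∈ s) (hbP : b ∉ (fun i => (f ^ i) a) '' Set.Iio m) :
    m < s.card ∧ (s : Set α) \ (fun i => (f ^ i) a) '' Set.Iio m =
      (fun i => (f ^ i) ((f ^ m) a)) '' Set.Iio (s.card - m) := by
  have hs := hf.coe_eq_image_pow_apply ha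
  have hshift (i : ℕ) : (f ^ i) ((f ^ m) a) = (f ^ (i + m)) a := by rw [pow_add, Perm.mul_apply]
  have hm : m < s.card := by
    by_contra! hm
    obtain ⟨i, hi, rfl⟩ : b ∈ (fun i => (f ^ i) a) '' Set.Iio s.card := hs ▸ hb
    exact hbP ⟨i, lt_of_lt_of_le hi hm, rfl⟩
  refine ⟨hm, Set.ext fun c => ⟨?_, ?_⟩⟩
  · rintro ⟨hc, hcP⟩
    obtain ⟨i, hi, rfl⟩ : c ∈ (fun i => (f ^ i) a) '' Set.Iio s.card := hs ▸ hc
    have hmi : m ≤ i := not_lt.mp fun him => hcP ⟨i, him, rfl⟩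
    refine ⟨i - m, by simp only [Set.mem_Iio] at hi ⊢; omega, ?_⟩
    simp only [hshift, Nat.sub_add_cancel hmi]
  · rintro ⟨i, hi, rfl⟩
    simp only [Set.mem_Iio] at hi
    refine ⟨by simpa [hshift] using hf.1.mapsTo.perm_pow (i + m) ha, ?_⟩
    rintro ⟨j, hj, hji⟩
    have := hf.injOn_pow_apply ha (lt_trans hj hm) (show i + m < s.card by omega)
      (hji.trans (hshift i))
    simp only [Set.mem_Iio] at hj
    omega

end Circle

lemma IsConsecPiece.support_diff {d : ℕ} {γ : Perm (Fin d)} {P : Set (Fin d)} {ν : Fin d}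
    (hγ : γ.IsCycle) (hP : IsConsecPiece γ P) (hν : ν ∈ γ.support) (hνP : ν ∉ P) :
    IsConsecPiece γ ((γ.support : Set (Fin d)) \ P) := by
  obtain ⟨x, hx, m, -, rfl⟩ := hP
  have hγs : γ.IsCycleOn (γ.support : Set (Fin d)) := by
    rw [coe_support_eq_set_support]; exact hγ.isCycleOn
  obtain ⟨hm, hdiff⟩ := hγs.diff_image_pow_apply hx hν hνP
  exact ⟨(γ ^ m) x, pow_apply_mem_support.mpr hx, γ.support.card - m, by omega, hdiff⟩

/-- **Lemma 4.3.** Let `γ` be a cycle in `S_d`, `S' ⊆ S`, and let `G` be an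
`S'`-`supp(γ)` bipartite tree (its edges lie inside the vertex set
`S' ∪ supp(γ)`, on which it induces a tree). If every `[d]`-vertex incident to `s ∈ S'`
has CICPP on `(G, γ)`, then `s` has CPP on `(G, γ)`. -/
theorem CICPP_of_incident_implies_CPP (d k : ℕ)
    (γ : Perm (Fin d)) (hγ : γ.IsCycle)
    (S' : Set (Fin k)) (G : SimpleGraph (Fin k ⊕ Fin d))
    (hbip : IsBipartiteSD G)
    (A : Set (Fin k ⊕ Fin d))
    (hA : A = Sum.inl '' S' ∪ Sum.inr '' (↑γ.support : Set (Fin d)))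
    (hVert : ∀ v w, G.Adj v w → v ∈ A ∧ w ∈ A)
    (htree : (G.induce A).IsTree)
    (s : Fin k) (hs : s ∈ S')
    (hCICPP : ∀ x : Fin d, G.Adj (Sum.inl s) (Sum.inr x) → HasCICPP G γ x) :
    HasCPP G γ s := by
  have hAd (y : Fin d) : Sum.inr y ∈ A ↔ y ∈ γ.support := by simp [hA]
  have hG : G.IsAcyclic := htree.isAcyclic.of_induce fun v w h => (hVert v w h).1
  have hreach (y : Fin d) (hy : y ∈ γ.support) : G.Reachable (Sum.inl s) (Sum.inr y) :=
    (htree.connected ⟨_, hA ▸ Or.inl ⟨s, hs, rfl⟩⟩ ⟨_, (hAd y).mpr hy⟩).map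
      (Embedding.induce A).toHom
  intro x hx
  obtain ⟨_ | ν, hsν, hνx⟩ := exists_adj_reachable_delV (hreach x hx) Sum.inr_ne_inl
  · exact absurd hsν (hbip.1 _ _)
  have hν : ν ∈ γ.support := (hAd ν).mp (hVert _ _ hsν).2
  have hcomp : compD G (Sum.inl s) (Sum.inr x) =
      (γ.support : Set (Fin d)) \ compD G (Sum.inr ν) (Sum.inl s) := by
    ext y
    simp only [compD, Set.mem_sdiff, Set.mem_ofPred_eq, Finset.mem_coe]
    rw [show _ ↔ (delV G (Sum.inl s)).Reachable (Sum.inr ν) (Sum.inr y) from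
      ⟨hνx.trans, hνx.symm.trans⟩]
    by_cases hy : y ∈ γ.support
    · rw [hG.reachable_delV_iff hsν (hreach y hy), and_iff_right hy]
    · refine iff_of_false (fun h => hy ((hAd y).mp ?_)) (fun h => hy h.1)
      exact (h.mono (deleteEdges_le _)).mem_of_adj_closed (fun _ _ hab _ => (hVert _ _ hab).2)
        ((hAd ν).mpr hν)
  rw [hcomp]
  exact ((hCICPP ν hsν).1 s hsν.symm).support_diff hγ hν (not_reachable_delV Sum.inl_ne_inr)
end

section
/- Let τ ∈ S_d be a d-cycle and let (σ_1, ..., σ_{r-1}) be a factorization of τ of type (e_1, ..., e_{r-1}). Then ∑_{i=1}^{r-1} (e_i − 1) = d − 1 + 2g for some integer g ≥ 0; that is, ∑_{i=1}^{r-1} (e_i − 1) ≥ d − 1 and ∑_{i=1}^{r-1} (e_i − 1) − (d − 1) is even. -/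
/-!
Let `ℓ(π)` be the rank of `π - 1` acting on `ℚ^α` by permuting coordinates. Since
`fg - 1 = f (g - 1) + (f - 1)`, `ℓ` is subadditive; a transposition has `ℓ ≤ 1` and an `e`-cycle
is a product of `e - 1` transpositions, so `ℓ(σᵢ) ≤ eᵢ - 1`. Only constant functions are fixed by
a `d`-cycle on `Fin d`, so `ℓ(τ) ≥ d - 1`, whence `d - 1 ≤ ∑ (eᵢ - 1)`. The parity comes from
comparing signs: an `e`-cycle has sign `(-1)^(e - 1)`.
-/

open Equiv Equiv.Perm Module

theorem LinearMap.finrank_range_mul_sub_one_le {K V : Type*} [Field K] [AddCommGroup V]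
    [Module K V] [FiniteDimensional K V] (f g : Module.End K V) :
    finrank K (f * g - 1).range ≤ finrank K (f - 1).range + finrank K (g - 1).range := by
  have hsplit : f * g - 1 = f * (g - 1) + (f - 1) := by noncomm_ring
  calc finrank K (f * g - 1).range
      ≤ finrank K ((f * (g - 1)).range ⊔ (f - 1).range : Submodule K V) := by
        rw [hsplit]; exact Submodule.finrank_mono (LinearMap.range_add_le _ _)
    _ ≤ finrank K (f * (g - 1)).range + finrank K (f - 1).range :=
        Submodule.finrank_add_le_finrank_add_finrank _ _
    _ ≤ finrank K (g - 1).range + finrank K (f - 1).range := by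
        rw [Module.End.mul_eq_comp, LinearMap.range_comp]
        gcongr
        exact Submodule.finrank_map_le _ _
    _ = finrank K (f - 1).range + finrank K (g - 1).range := add_comm _ _

theorem exists_eq_add_two_mul_of_neg_one_pow_eq {a b : ℕ} (hab : a ≤ b)
    (h : (-1 : ℤˣ) ^ a = (-1) ^ b) : ∃ g, b = a + 2 * g := by
  obtain ⟨c, rfl⟩ := Nat.exists_eq_add_of_le hab
  rw [pow_add, left_eq_mul, neg_one_pow_eq_one_iff_even (by decide)] at h
  obtain ⟨g, rfl⟩ := h
  exact ⟨g, by ring⟩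

namespace Equiv.Perm

variable {α : Type*}

/-- For finite `α` this is `|α|` minus the number of cycles of `π`. -/
noncomputable def absoluteLength (π : Perm α) : ℕ :=
  finrank ℚ (LinearMap.funLeft ℚ ℚ π - 1).range

@[simp]
theorem absoluteLength_one : absoluteLength (1 : Perm α) = 0 := by
  have : LinearMap.funLeft ℚ ℚ ⇑(1 : Perm α) = 1 := LinearMap.ext (LinearMap.funLeft_id ℚ ℚ)
  rw [absoluteLength, this, sub_self, LinearMap.range_zero, finrank_bot]

theorem absoluteLength_mul_le [Fintype α] (f g : Perm α) :
    absoluteLength (f * g) ≤ absoluteLength f + absoluteLength g := by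
  have :=
    LinearMap.finrank_range_mul_sub_one_le (LinearMap.funLeft ℚ ℚ g) (LinearMap.funLeft ℚ ℚ f)
  rw [absoluteLength, coe_mul, LinearMap.funLeft_comp]
  exact this.trans_eq (add_comm _ _)

theorem absoluteLength_list_prod_le [Fintype α] (l : List (Perm α)) :
    absoluteLength l.prod ≤ (l.map absoluteLength).sum := by
  induction l with
  | nil => simp
  | cons f l ih =>
    rw [List.prod_cons, List.map_cons, List.sum_cons]
    exact (absoluteLength_mul_le f l.prod).trans (by gcongr)

theorem SameCycle.apply_eq_of_apply_perm_eq [Finite α] {β : Type*} {π : Perm α} {h : α → β}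
    (hh : ∀ x, h (π x) = h x) {x y : α} (hxy : π.SameCycle x y) : h x = h y := by
  obtain ⟨n, rfl⟩ := hxy.exists_nat_pow_eq
  clear hxy
  induction n with
  | zero => rfl
  | succ n ih => rw [pow_succ', mul_apply, hh, ih]

theorem card_sub_one_le_absoluteLength [Fintype α] {π : Perm α}
    (hπ : ∀ x y, π.SameCycle x y) : Fintype.card α - 1 ≤ absoluteLength π := by
  rcases isEmpty_or_nonempty α with hα | ⟨⟨x₀⟩⟩
  · simp
  -- a function fixed by `π` is constant
  have hker : finrank ℚ (LinearMap.funLeft ℚ ℚ π - 1).ker ≤ 1 := by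
    refine finrank_le_one ⟨fun _ => 1, ?_⟩
      fun ⟨h, hh⟩ => ⟨h x₀, Subtype.ext (funext fun y => ?_)⟩
    · ext; simp
    · have hinv : ∀ x, h (π x) = h x := fun x => by
        simpa [sub_eq_zero] using congrFun (LinearMap.mem_ker.1 hh) x
      simpa using (hπ x₀ y).apply_eq_of_apply_perm_eq hinv
  have := LinearMap.finrank_range_add_finrank_ker (LinearMap.funLeft ℚ ℚ π - 1)
  rw [finrank_fintype_fun_eq_card] at this
  unfold absoluteLength
  omega

variable [DecidableEq α]

theorem absoluteLength_swap_le (a b : α) : absoluteLength (swap a b) ≤ 1 := by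
  set v : α → ℚ := Pi.single a 1 - Pi.single b 1
  have hrange : (LinearMap.funLeft ℚ ℚ (swap a b) - 1).range ≤ ℚ ∙ v := by
    rintro _ ⟨h, rfl⟩
    refine Submodule.mem_span_singleton.2 ⟨h b - h a, funext fun x => ?_⟩
    rcases eq_or_ne x a with rfl | hxa <;> rcases eq_or_ne x b with rfl | hxb <;>
      simp [v, swap_apply_of_ne_of_ne, *]
  exact (Submodule.finrank_mono hrange).trans ((finrank_span_le_card _).trans (by simp))

theorem absoluteLength_formPerm_le [Fintype α] :
    ∀ l : List α, absoluteLength l.formPerm ≤ l.length - 1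
  | [] | [_] => by simp
  | x :: y :: l => by
    rw [List.formPerm_cons_cons]
    calc absoluteLength (swap x y * (y :: l).formPerm)
        ≤ 1 + ((y :: l).length - 1) :=
          (absoluteLength_mul_le _ _).trans
            (add_le_add (absoluteLength_swap_le x y) (absoluteLength_formPerm_le (y :: l)))
      _ = (x :: y :: l).length - 1 := by simp [add_comm]

theorem IsCycle.absoluteLength_le [Fintype α] {c : Perm α} (hc : c.IsCycle) :
    absoluteLength c ≤ c.support.card - 1 := by
  obtain ⟨x, hx, -⟩ := id hc
  have := absoluteLength_formPerm_le (c.toList x)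
  rwa [formPerm_toList, length_toList, hc.cycleOf_eq hx] at this

theorem IsCycle.sign_eq_neg_one_pow [Fintype α] {c : Perm α} (hc : c.IsCycle) :
    Perm.sign c = (-1) ^ (c.support.card - 1) := by
  obtain ⟨k, hk⟩ := Nat.exists_eq_add_of_le' hc.two_le_card_support
  rw [hc.sign, hk]
  simp [pow_succ]

end Equiv.Perm

theorem fac_riemann_hurwitz_general (d r : ℕ)
    (τ : Perm (Fin d)) (hτ : τ.IsCycle) (hτd : τ.support.card = d)
    (e : Fin (r - 1) → ℕ)
    (σ : Fin (r - 1) → Perm (Fin d))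
    (hσ : (∀ i, (σ i).IsCycle ∧ (σ i).support.card = e i) ∧ (List.ofFn σ).prod = τ) :
    ∃ g : ℕ, ∑ i, (e i - 1) = d - 1 + 2 * g := by
  obtain ⟨hcyc, hprod⟩ := hσ
  have hsupp : τ.support = Finset.univ := Finset.eq_univ_of_card _ (by simpa using hτd)
  have htrans : ∀ x y, τ.SameCycle x y := fun x y =>
    hτ.sameCycle (mem_support.1 (hsupp ▸ Finset.mem_univ x))
      (mem_support.1 (hsupp ▸ Finset.mem_univ y))
  have hle : d - 1 ≤ ∑ i, (e i - 1) :=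
    calc d - 1 ≤ absoluteLength τ := by simpa using card_sub_one_le_absoluteLength htrans
      _ ≤ ∑ i, absoluteLength (σ i) := by
        simpa [← hprod, List.sum_ofFn] using absoluteLength_list_prod_le (List.ofFn σ)
      _ ≤ ∑ i, (e i - 1) :=
        Finset.sum_le_sum fun i _ => (hcyc i).2 ▸ (hcyc i).1.absoluteLength_le
  have hsign : (-1 : ℤˣ) ^ (d - 1) = (-1) ^ ∑ i, (e i - 1) := by
    rw [← hτd, ← hτ.sign_eq_neg_one_pow, ← hprod, map_list_prod, List.map_ofFn,
      List.prod_ofFn, ← Finset.prod_pow_eq_pow_sum]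
    exact Finset.prod_congr rfl fun i _ => (hcyc i).2 ▸ (hcyc i).1.sign_eq_neg_one_pow
  exact exists_eq_add_two_mul_of_neg_one_pow_eq hle hsign

/-- If `(σ₁, …, σ_{r-1})` is a factorization of a `d`-cycle `τ` of type `(e₁, …, e_{r-1})`,
then `∑ (eᵢ - 1) = d - 1 + 2g` for some integer `g ≥ 0`. -/
theorem fac_riemann_hurwitz (d r : ℕ)
    (τ : Perm (Fin d)) (hτ : τ.IsCycle) (hτd : τ.support.card = d)
    (e : Fin (r - 1) → ℕ) (he : ∀ i, 2 ≤ e i)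
    (σ : Fin (r - 1) → Perm (Fin d))
    (hσ : (∀ i, (σ i).IsCycle ∧ (σ i).support.card = e i) ∧ (List.ofFn σ).prod = τ) :
    ∃ g : ℕ, ∑ i, (e i - 1) = d - 1 + 2 * g :=
  fac_riemann_hurwitz_general d r τ hτ hτd e σ hσ
end
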